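/- arXiv:1612.06498 — 12 statements merged into one kernel-verified Lean document; each statement's English description precedes it below -/
import Mathlib

section
/- Let n ≥ 1, L > 0, and let f : ℝⁿ × ℝⁿ → ℝⁿ be L-Lipschitz (with respect to the Euclidean norm on ℝ²ⁿ). Let λ₁, λ₂, λ₃ be three pairwise distinct negative real numbers satisfying L·φ(λ₁,λ₂,λ₃)·h(λ₁,λ₂,λ₃) < 1, and set k_p = −(λ₁λ₂ + λ₁λ₃ + λ₂λ₃), k_i = λ₁λ₂λ₃, k_d = λ₁ + λ₂ + λ₃. Then for any setpoint y* ∈ ℝⁿ and any differentiable functions x₁, x₂ : [0,∞) → ℝⁿ satisfying x₁'(t) = x₂(t) and x₂'(t) = f(x₁(t), x₂(t)) + k_p·(x₁(t) − y*) + k_i·∫₀ᵗ (x₁(s) − y*) ds + k_d·x₂(t) for all t ≥ 0, there exist constants C > 0 and μ > 0 such that ‖x₁(t) − y*‖ + ‖x₂(t)‖ ≤ C·e^{−μt} for all t ≥ 0; in particular x₁(t) → y* and x₂(t) → 0 exponentially fast, for every initial value (x₁(0), x₂(0)) ∈ ℝⁿ × ℝⁿ. -/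
/-!
After a suitable reordering `(a, b, c)` of the eigenvalues, in the error `e = x₁ - y*` and the
integrator state the closed loop becomes a cascade of three stable first-order filters driven
by `g = f(x₁, x₂) - f(y*, 0)`: `v' = a v + g`, `r' = c r + v'`, `e' = b e + r`, and
`x₂ = b e + r`. For a filter `u' = σ u + q`, the energy identity for `‖u‖²` bounds `∫ ‖u‖²` by
`∫ ‖q‖² / σ²` and `∫ ‖ν u + q‖²` by `∫ ‖q‖²` whenever `2σ ≤ ν ≤ 0`. Chaining these, the
`L²`-gain from `g` back to `(e, x₂)`, and then through the Lipschitz bound to `g`, is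
`L² (1 + 1/b²) / c² ≤ (L φ h)² < 1`, so the loop closes and every signal is bounded. The
signals multiplied by `e^{μt}` form a cascade of the same shape with poles shifted by `μ`,
which for small `μ > 0` still has gain `< 1`; boundedness of the weighted signals is
exponential decay.
-/

open Real MeasureTheory intervalIntegral

noncomputable def phi (l1 l2 l3 : ℝ) : ℝ :=
  Real.sqrt (((l3 - l2) ^ 2 + (l3 - l1) ^ 2 + l3 ^ 2 * (l2 - l1) ^ 2) /
    ((l3 - l1) ^ 2 * (l2 - l1) ^ 2 * (l3 - l2) ^ 2))

noncomputable def hfun (l1 l2 l3 : ℝ) : ℝ :=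
  Real.sqrt (3 + l1 ^ 2 + l2 ^ 2 + 1 / l3 ^ 2)

open Set Filter Topology

theorem phi_swap (l1 l2 l3 : ℝ) : phi l2 l1 l3 = phi l1 l2 l3 := by
  unfold phi; ring_nf

theorem hfun_swap (l1 l2 l3 : ℝ) : hfun l2 l1 l3 = hfun l1 l2 l3 := by
  unfold hfun; ring_nf

theorem div_le_sq_phi_mul_hfun {l1 l2 l3 : ℝ} (h12 : l1 ≠ l2) (h13 : l1 ≠ l3) (h23 : l2 ≠ l3) :
    (3 + l1 ^ 2 + l2 ^ 2) / ((l3 - l1) ^ 2 * (l2 - l1) ^ 2)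
      ≤ (phi l1 l2 l3 * hfun l1 l2 l3) ^ 2 := by
  have h21 : l2 - l1 ≠ 0 := sub_ne_zero.mpr h12.symm
  have h31 : l3 - l1 ≠ 0 := sub_ne_zero.mpr h13.symm
  have h32 : l3 - l2 ≠ 0 := sub_ne_zero.mpr h23.symm
  rw [mul_pow, phi, hfun, Real.sq_sqrt (by positivity), Real.sq_sqrt (by positivity)]
  calc (3 + l1 ^ 2 + l2 ^ 2) / ((l3 - l1) ^ 2 * (l2 - l1) ^ 2)
      = (l3 - l2) ^ 2 / ((l3 - l1) ^ 2 * (l2 - l1) ^ 2 * (l3 - l2) ^ 2)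
        * (3 + l1 ^ 2 + l2 ^ 2) := by field_simp
    _ ≤ _ := by
        apply mul_le_mul _ (by linarith [one_div_nonneg.mpr (sq_nonneg l3)]) (by positivity)
          (by positivity)
        gcongr
        nlinarith [sq_nonneg (l3 - l1), sq_nonneg (l3 * (l2 - l1))]

theorem one_add_one_div_sq_div_sq_le {b c x y : ℝ} (hb : b ≠ 0) (hx : 0 < x)
    (hxbc : x ≤ b ^ 2 * c ^ 2) (hby : 1 + b ^ 2 ≤ y) :
    (1 + 1 / b ^ 2) / c ^ 2 ≤ y / x := by
  have hc : c ≠ 0 := by rintro rfl; simp at hxbc; linarith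
  calc (1 + 1 / b ^ 2) / c ^ 2 = (1 + b ^ 2) / (b ^ 2 * c ^ 2) := by field_simp; ring
    _ ≤ y / x := by gcongr; nlinarith [sq_nonneg b]

theorem exists_reordering_gain_le {l1 l2 l3 : ℝ} (h1 : l1 < 0) (h2 : l2 < 0) (h3 : l3 < 0)
    (h12 : l1 ≠ l2) (h13 : l1 ≠ l3) (h23 : l2 ≠ l3) :
    ∃ a b c : ℝ, a < 0 ∧ b < 0 ∧ c < 0 ∧ a + b + c = l1 + l2 + l3 ∧
      a * b + a * c + b * c = l1 * l2 + l1 * l3 + l2 * l3 ∧ a * b * c = l1 * l2 * l3 ∧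
      (1 + 1 / b ^ 2) / c ^ 2 ≤ (phi l1 l2 l3 * hfun l1 l2 l3) ^ 2 := by
  wlog h21 : l2 < l1 generalizing l1 l2
  · obtain ⟨a, b, c, ha, hb, hc, hs, hp, hq, hg⟩ :=
      this h2 h1 h12.symm h23 h13 (h12.lt_or_gt.resolve_right h21)
    refine ⟨a, b, c, ha, hb, hc, by linarith, by linarith, by linarith, ?_⟩
    rwa [phi_swap, hfun_swap] at hg
  -- Since `l1` is the larger of `l1, l2`, in both cases `(l3 - l1)² (l2 - l1)² ≤ b² c²`.
  have hgain := div_le_sq_phi_mul_hfun h12 h13 h23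
  rcases h13.lt_or_gt with h31 | h31
  · refine ⟨l3, l1, l2, h3, h1, h2, by ring, by ring, by ring, le_trans ?_ hgain⟩
    exact one_add_one_div_sq_div_sq_le h1.ne (by positivity)
      (mul_le_mul (by nlinarith) (by nlinarith) (by positivity) (by positivity)) (by nlinarith)
  · refine ⟨l1, l2, l3, h1, h2, h3, rfl, rfl, rfl, le_trans ?_ hgain⟩
    exact one_add_one_div_sq_div_sq_le h2.ne (by positivity)
      ((mul_le_mul (by nlinarith) (by nlinarith) (by positivity) (by positivity)).trans_eq
        (mul_comm _ _)) (by nlinarith)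

theorem sq_mul_lt_sq_of_div_le_sq {L x y c : ℝ} (hL : 0 ≤ L) (hx : 0 ≤ x) (hLx : L * x < 1)
    (hc : c ≠ 0) (hy : y / c ^ 2 ≤ x ^ 2) : L ^ 2 * y < c ^ 2 := by
  have hc2 : 0 < c ^ 2 := by positivity
  have h : L ^ 2 * (y / c ^ 2) < 1 :=
    calc L ^ 2 * (y / c ^ 2) ≤ L ^ 2 * x ^ 2 := by gcongr
      _ = (L * x) ^ 2 := by ring
      _ < 1 := pow_lt_one₀ (by positivity) hLx two_ne_zero
  rwa [← mul_div_assoc, div_lt_one hc2] at h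

section NormedSpace

variable {F : Type*} [NormedAddCommGroup F] [NormedSpace ℝ F]

theorem continuousOn_Ici_of_hasDerivAt {u u' : ℝ → F}
    (hu : ∀ t, 0 ≤ t → HasDerivAt u (u' t) t) : ContinuousOn u (Ici 0) :=
  fun t ht => (hu t ht).continuousAt.continuousWithinAt

theorem HasDerivAt.exp_mul_smul {σ μ t : ℝ} {u : ℝ → F} {q : F}
    (hu : HasDerivAt u (σ • u t + q) t) :
    HasDerivAt (fun s => Real.exp (μ * s) • u s)
      ((σ + μ) • (Real.exp (μ * t) • u t) + Real.exp (μ * t) • q) t := by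
  have hexp : HasDerivAt (fun s => Real.exp (μ * s)) (Real.exp (μ * t) * μ) t := by
    simpa using ((hasDerivAt_id t).const_mul μ).exp
  exact (hexp.smul hu).congr_deriv (by module)

theorem exists_cascade_of_pid [CompleteSpace F] {a b c : ℝ} (ha : a ≠ 0) {x1 x2 u : ℝ → F}
    (ystar u0 : F)
    (hx1 : ∀ t, 0 ≤ t → HasDerivAt x1 (x2 t) t)
    (hx2 : ∀ t, 0 ≤ t → HasDerivAt x2
      (u t + (-(a * b + a * c + b * c)) • (x1 t - ystar)
        + (a * b * c) • (∫ s in (0:ℝ)..t, (x1 s - ystar)) + (a + b + c) • x2 t) t) :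
    ∃ v r : ℝ → F,
      (∀ t, 0 ≤ t → HasDerivAt v (a • v t + (u t - u0)) t) ∧
      (∀ t, 0 ≤ t → HasDerivAt r (c • r t + (a • v t + (u t - u0))) t) ∧
      (∀ t, 0 ≤ t → HasDerivAt (fun t => x1 t - ystar) (b • (x1 t - ystar) + r t) t) ∧
      ∀ t, b • (x1 t - ystar) + r t = x2 t := by
  -- Nothing is known about `x1` on `(-∞, 0)`; freezing the error there makes the primitive of
  -- the error differentiable at `t = 0` as well.
  set e' : ℝ → F := fun s => x1 (max s 0) - ystar
  have he'c : Continuous e' :=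
    ((continuousOn_Ici_of_hasDerivAt hx1).comp_continuous (continuous_id.max continuous_const)
      fun s => le_max_right s 0).sub continuous_const
  have he' : ∀ t, 0 ≤ t → e' t = x1 t - ystar := fun t ht => by simp [e', max_eq_left ht]
  have hint : ∀ t, 0 ≤ t → ∫ s in (0:ℝ)..t, (x1 s - ystar) = ∫ s in (0:ℝ)..t, e' s :=
    fun t ht => intervalIntegral.integral_congr fun s hs => (he' s (uIcc_of_le ht ▸ hs).1).symm
  have hinv : a • a⁻¹ • u0 = u0 := smul_inv_smul₀ ha u0
  refine ⟨fun t => x2 t - (b + c) • (x1 t - ystar) + (b * c) • (∫ s in (0:ℝ)..t, e' s)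
      + a⁻¹ • u0, fun t => x2 t - b • (x1 t - ystar), fun t ht => ?_, fun t ht => ?_,
      fun t ht => ?_, fun t => by simp⟩
  · have hI := (he'c.integral_hasStrictDerivAt 0 t).hasDerivAt.const_smul (b * c)
    refine ((((hx2 t ht).sub (((hx1 t ht).sub_const ystar).const_smul (b + c))).add
      hI).add_const _).congr_deriv ?_
    rw [hint t ht, he' t ht]
    linear_combination (norm := module) -hinv
  · refine ((hx2 t ht).sub (((hx1 t ht).sub_const ystar).const_smul b)).congr_deriv ?_
    rw [hint t ht]
    linear_combination (norm := module) -hinv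
  · exact ((hx1 t ht).sub_const ystar).congr_deriv (by simp)

end NormedSpace

section Cascade

variable {F : Type*} [NormedAddCommGroup F] [InnerProductSpace ℝ F]

theorem integral_norm_sq_smul_add_eq {σ ν T : ℝ} {u q : ℝ → F} (hT : 0 ≤ T)
    (hu : ∀ t ∈ Icc 0 T, HasDerivAt u (σ • u t + q t) t) (hq : ContinuousOn q (Icc 0 T)) :
    ∫ t in 0..T, ‖ν • u t + q t‖ ^ 2 =
      (∫ t in 0..T, ‖q t‖ ^ 2) + (ν ^ 2 - 2 * σ * ν) * (∫ t in 0..T, ‖u t‖ ^ 2)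
        + ν * (‖u T‖ ^ 2 - ‖u 0‖ ^ 2) := by
  rw [← uIcc_of_le hT] at hu hq
  have hcu : ContinuousOn u (uIcc 0 T) := fun t ht => (hu t ht).continuousAt.continuousWithinAt
  have hftc : ∫ t in 0..T, 2 * inner ℝ (u t) (σ • u t + q t) = ‖u T‖ ^ 2 - ‖u 0‖ ^ 2 :=
    intervalIntegral.integral_eq_sub_of_hasDerivAt (fun t ht => (hu t ht).norm_sq)
      (ContinuousOn.intervalIntegrable (by fun_prop))
  have hpt : ∀ t, ‖ν • u t + q t‖ ^ 2 = ‖q t‖ ^ 2 + (ν ^ 2 - 2 * σ * ν) * ‖u t‖ ^ 2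
      + ν * (2 * inner ℝ (u t) (σ • u t + q t)) := fun t => by
    rw [norm_add_sq_real, norm_smul, inner_add_right, inner_smul_left, inner_smul_right,
      real_inner_self_eq_norm_sq, Real.norm_eq_abs, mul_pow, sq_abs]
    simp only [conj_trivial]
    ring
  simp_rw [hpt]
  rw [intervalIntegral.integral_add, intervalIntegral.integral_add,
    intervalIntegral.integral_const_mul, intervalIntegral.integral_const_mul, hftc]
  all_goals exact ContinuousOn.intervalIntegrable (by fun_prop)

theorem integral_norm_sq_smul_add_le {σ ν T : ℝ} {u q : ℝ → F} (hT : 0 ≤ T)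
    (hu : ∀ t ∈ Icc 0 T, HasDerivAt u (σ • u t + q t) t) (hq : ContinuousOn q (Icc 0 T))
    (hσν : 2 * σ ≤ ν) (hν : ν ≤ 0) :
    ∫ t in 0..T, ‖ν • u t + q t‖ ^ 2 ≤ (∫ t in 0..T, ‖q t‖ ^ 2) + -ν * ‖u 0‖ ^ 2 := by
  rw [integral_norm_sq_smul_add_eq hT hu hq]
  have hA : 0 ≤ ∫ t in 0..T, ‖u t‖ ^ 2 := intervalIntegral.integral_nonneg hT fun t _ => sq_nonneg _
  have hgain : (ν ^ 2 - 2 * σ * ν) * ∫ t in 0..T, ‖u t‖ ^ 2 ≤ 0 :=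
    mul_nonpos_of_nonpos_of_nonneg (by nlinarith) hA
  nlinarith [mul_nonpos_of_nonpos_of_nonneg hν (sq_nonneg ‖u T‖)]

theorem sq_mul_integral_norm_sq_add_le {σ T : ℝ} {u q : ℝ → F} (hT : 0 ≤ T)
    (hu : ∀ t ∈ Icc 0 T, HasDerivAt u (σ • u t + q t) t) (hq : ContinuousOn q (Icc 0 T)) :
    σ ^ 2 * (∫ t in 0..T, ‖u t‖ ^ 2) + -σ * ‖u T‖ ^ 2
      ≤ (∫ t in 0..T, ‖q t‖ ^ 2) + -σ * ‖u 0‖ ^ 2 := by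
  have h := integral_norm_sq_smul_add_eq (ν := σ) hT hu hq
  have h0 : 0 ≤ ∫ t in 0..T, ‖σ • u t + q t‖ ^ 2 :=
    intervalIntegral.integral_nonneg hT fun t _ => sq_nonneg _
  linarith

theorem cascade_integral_input_bounded {L σa σb σc a b : ℝ} {V R E G : ℝ → F}
    (hV : ∀ t, 0 ≤ t → HasDerivAt V (σa • V t + G t) t)
    (hR : ∀ t, 0 ≤ t → HasDerivAt R (σc • R t + (a • V t + G t)) t)
    (hE : ∀ t, 0 ≤ t → HasDerivAt E (σb • E t + R t) t)
    (hG : ContinuousOn G (Ici 0))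
    (hGle : ∀ t, 0 ≤ t → ‖G t‖ ^ 2 ≤ L ^ 2 * (‖E t‖ ^ 2 + ‖b • E t + R t‖ ^ 2))
    (hσa : 2 * σa ≤ a) (ha : a ≤ 0) (hσb : 2 * σb ≤ b) (hb : b ≤ 0) (hσb0 : σb < 0)
    (hσc : σc < 0) (hgain : L ^ 2 * (1 + 1 / σb ^ 2) < σc ^ 2) :
    ∃ M, ∀ T, 0 ≤ T → ∫ t in 0..T, ‖a • V t + G t‖ ^ 2 ≤ M := by
  have hVc := continuousOn_Ici_of_hasDerivAt hV
  have hRc := continuousOn_Ici_of_hasDerivAt hR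
  have hEc := continuousOn_Ici_of_hasDerivAt hE
  set β := 1 + 1 / σb ^ 2
  set cE := ‖E 0‖ ^ 2 * (1 / -σb + -b)
  -- the bound solves the small-gain inequality
  -- `σc² QP ≤ L² β (QP + (-σc) ‖R 0‖²) + σc² (L² cE + (-a) ‖V 0‖²)` for `QP = ∫ ‖a V + G‖²`
  refine ⟨(L ^ 2 * β * (-σc * ‖R 0‖ ^ 2) + σc ^ 2 * (L ^ 2 * cE + -a * ‖V 0‖ ^ 2))
    / (σc ^ 2 - L ^ 2 * β), fun T hT => ?_⟩
  have hsub : Icc 0 T ⊆ Ici 0 := fun t ht => ht.1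
  have hI : ∀ {φ : ℝ → ℝ}, ContinuousOn φ (Ici 0) → IntervalIntegrable φ volume 0 T :=
    fun hφ => (hφ.mono (uIcc_of_le hT ▸ hsub)).intervalIntegrable
  set QG := ∫ t in 0..T, ‖G t‖ ^ 2
  set QP := ∫ t in 0..T, ‖a • V t + G t‖ ^ 2
  set QR := ∫ t in 0..T, ‖R t‖ ^ 2
  set QE := ∫ t in 0..T, ‖E t‖ ^ 2
  set QX := ∫ t in 0..T, ‖b • E t + R t‖ ^ 2
  have hP : QP ≤ QG + -a * ‖V 0‖ ^ 2 :=
    integral_norm_sq_smul_add_le hT (fun t ht => hV t ht.1) (hG.mono hsub) hσa ha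
  have hR' : σc ^ 2 * QR + -σc * ‖R T‖ ^ 2 ≤ QP + -σc * ‖R 0‖ ^ 2 :=
    sq_mul_integral_norm_sq_add_le hT (fun t ht => hR t ht.1)
      (((hVc.const_smul a).add hG).mono hsub)
  have hE' : σb ^ 2 * QE + -σb * ‖E T‖ ^ 2 ≤ QR + -σb * ‖E 0‖ ^ 2 :=
    sq_mul_integral_norm_sq_add_le hT (fun t ht => hE t ht.1) (hRc.mono hsub)
  have hX : QX ≤ QR + -b * ‖E 0‖ ^ 2 :=
    integral_norm_sq_smul_add_le hT (fun t ht => hE t ht.1) (hRc.mono hsub) hσb hb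
  have hGEX : QG ≤ L ^ 2 * (QE + QX) := by
    rw [← intervalIntegral.integral_add (hI (by fun_prop)) (hI (by fun_prop)),
      ← intervalIntegral.integral_const_mul]
    exact intervalIntegral.integral_mono_on hT (hI (by fun_prop)) (hI (by fun_prop))
      fun t ht => hGle t ht.1
  have hσb2 : 0 < σb ^ 2 := by nlinarith
  have hQE : QE ≤ QR / σb ^ 2 + ‖E 0‖ ^ 2 / -σb := by
    rw [div_add_div _ _ hσb2.ne' (by linarith), le_div_iff₀ (by nlinarith)]
    nlinarith [sq_nonneg ‖E T‖]
  have hQEX : QE + QX ≤ β * QR + cE := by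
    have hsplit : β * QR + cE = QR + (QR / σb ^ 2 + ‖E 0‖ ^ 2 / -σb) + -b * ‖E 0‖ ^ 2 := by
      simp only [β, cE]
      ring
    linarith
  have hQR : σc ^ 2 * QR ≤ QP + -σc * ‖R 0‖ ^ 2 := by nlinarith [sq_nonneg ‖R T‖]
  have hβ : 0 ≤ L ^ 2 * β := by positivity
  rw [le_div_iff₀ (by linarith)]
  nlinarith [mul_le_mul_of_nonneg_left hQR hβ, mul_le_mul_of_nonneg_left hQEX (sq_nonneg L)]

theorem cascade_norm_sq_bounded {σb σc P : ℝ} {R E Q : ℝ → F}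
    (hR : ∀ t, 0 ≤ t → HasDerivAt R (σc • R t + Q t) t)
    (hE : ∀ t, 0 ≤ t → HasDerivAt E (σb • E t + R t) t)
    (hQ : ContinuousOn Q (Ici 0)) (hQP : ∀ T, 0 ≤ T → ∫ t in 0..T, ‖Q t‖ ^ 2 ≤ P)
    (hσb : σb < 0) (hσc : σc < 0) :
    ∃ K, ∀ T, 0 ≤ T → ‖E T‖ ^ 2 + ‖R T‖ ^ 2 ≤ K := by
  refine ⟨‖E 0‖ ^ 2 + (P + -σc * ‖R 0‖ ^ 2) / σc ^ 2 / -σb + ‖R 0‖ ^ 2 + P / -σc,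
    fun T hT => ?_⟩
  have hsub : Icc 0 T ⊆ Ici 0 := fun t ht => ht.1
  have hR' := sq_mul_integral_norm_sq_add_le hT (fun t ht => hR t ht.1) (hQ.mono hsub)
  have hE' := sq_mul_integral_norm_sq_add_le hT (fun t ht => hE t ht.1)
    ((continuousOn_Ici_of_hasDerivAt hR).mono hsub)
  have hQR : 0 ≤ ∫ t in 0..T, ‖R t‖ ^ 2 :=
    intervalIntegral.integral_nonneg hT fun t _ => sq_nonneg _
  have hQE : 0 ≤ ∫ t in 0..T, ‖E t‖ ^ 2 :=
    intervalIntegral.integral_nonneg hT fun t _ => sq_nonneg _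
  have hRT : ‖R T‖ ^ 2 ≤ ‖R 0‖ ^ 2 + P / -σc := by
    rw [← sub_le_iff_le_add', le_div_iff₀ (by linarith)]
    nlinarith [hQP T hT, sq_nonneg σc]
  have hET : ‖E T‖ ^ 2 ≤ ‖E 0‖ ^ 2 + (P + -σc * ‖R 0‖ ^ 2) / σc ^ 2 / -σb := by
    have hσc2 : 0 < σc ^ 2 := by nlinarith
    have hQRP : ∫ t in 0..T, ‖R t‖ ^ 2 ≤ (P + -σc * ‖R 0‖ ^ 2) / σc ^ 2 := by
      rw [le_div_iff₀ hσc2]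
      nlinarith [hQP T hT, sq_nonneg ‖R T‖]
    have hσb' : 0 < -σb := by linarith
    rw [← sub_le_iff_le_add', le_div_iff₀ hσb']
    nlinarith [sq_nonneg σb]
  linarith

theorem exists_shift_gain_lt {L a b c : ℝ} (ha : a < 0) (hb : b < 0) (hc : c < 0)
    (hgain : L ^ 2 * (1 + 1 / b ^ 2) < c ^ 2) :
    ∃ μ > 0, μ < -a / 2 ∧ μ < -b / 2 ∧ μ < -c / 2 ∧
      L ^ 2 * (1 + 1 / (b + μ) ^ 2) < (c + μ) ^ 2 := by
  have hgain_near : ∀ᶠ μ in 𝓝 (0 : ℝ), L ^ 2 * (1 + 1 / (b + μ) ^ 2) < (c + μ) ^ 2 :=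
    ContinuousAt.eventually_lt (by fun_prop (disch := simp [hb.ne])) (by fun_prop)
      (by simpa using hgain)
  have hsmall : ∀ᶠ μ in 𝓝[>] (0 : ℝ), 0 < μ ∧ μ < -a / 2 ∧ μ < -b / 2 ∧ μ < -c / 2 ∧
      L ^ 2 * (1 + 1 / (b + μ) ^ 2) < (c + μ) ^ 2 := by
    filter_upwards [self_mem_nhdsWithin,
      nhdsWithin_le_nhds (eventually_lt_nhds (show (0 : ℝ) < -a / 2 by linarith)),
      nhdsWithin_le_nhds (eventually_lt_nhds (show (0 : ℝ) < -b / 2 by linarith)),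
      nhdsWithin_le_nhds (eventually_lt_nhds (show (0 : ℝ) < -c / 2 by linarith)),
      nhdsWithin_le_nhds hgain_near] with μ h₁ h₂ h₃ h₄ h₅
    exact ⟨h₁, h₂, h₃, h₄, h₅⟩
  exact hsmall.exists

theorem cascade_exp_decay {L a b c : ℝ} {v r e g : ℝ → F}
    (hv : ∀ t, 0 ≤ t → HasDerivAt v (a • v t + g t) t)
    (hr : ∀ t, 0 ≤ t → HasDerivAt r (c • r t + (a • v t + g t)) t)
    (he : ∀ t, 0 ≤ t → HasDerivAt e (b • e t + r t) t)
    (hg : ContinuousOn g (Ici 0))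
    (hgle : ∀ t, 0 ≤ t → ‖g t‖ ^ 2 ≤ L ^ 2 * (‖e t‖ ^ 2 + ‖b • e t + r t‖ ^ 2))
    (ha : a < 0) (hb : b < 0) (hc : c < 0) (hgain : L ^ 2 * (1 + 1 / b ^ 2) < c ^ 2) :
    ∃ C > 0, ∃ μ > 0, ∀ t, 0 ≤ t → ‖e t‖ + ‖b • e t + r t‖ ≤ C * Real.exp (-μ * t) := by
  obtain ⟨μ, hμ, hμa, hμb, hμc, hμgain⟩ := exists_shift_gain_lt ha hb hc hgain
  have hnorm : ∀ t (x : F), ‖Real.exp (μ * t) • x‖ = Real.exp (μ * t) * ‖x‖ := fun t x => by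
    rw [norm_smul, Real.norm_of_nonneg (Real.exp_pos _).le]
  have hV : ∀ t, 0 ≤ t → HasDerivAt (fun t => Real.exp (μ * t) • v t)
      ((a + μ) • (Real.exp (μ * t) • v t) + Real.exp (μ * t) • g t) t :=
    fun t ht => (hv t ht).exp_mul_smul
  have hR : ∀ t, 0 ≤ t → HasDerivAt (fun t => Real.exp (μ * t) • r t) ((c + μ) •
      (Real.exp (μ * t) • r t) + (a • Real.exp (μ * t) • v t + Real.exp (μ * t) • g t)) t :=
    fun t ht => (hr t ht).exp_mul_smul.congr_deriv (by module)
  have hE : ∀ t, 0 ≤ t → HasDerivAt (fun t => Real.exp (μ * t) • e t)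
      ((b + μ) • (Real.exp (μ * t) • e t) + Real.exp (μ * t) • r t) t :=
    fun t ht => (he t ht).exp_mul_smul
  have hGle : ∀ t, 0 ≤ t → ‖Real.exp (μ * t) • g t‖ ^ 2 ≤ L ^ 2 * (‖Real.exp (μ * t) • e t‖ ^ 2
      + ‖b • Real.exp (μ * t) • e t + Real.exp (μ * t) • r t‖ ^ 2) := fun t ht => by
    have h := mul_le_mul_of_nonneg_left (hgle t ht) (sq_nonneg (Real.exp (μ * t)))
    rw [smul_comm b, ← smul_add, hnorm, hnorm, hnorm]
    linear_combination h
  have hVc := continuousOn_Ici_of_hasDerivAt hV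
  obtain ⟨M, hM⟩ := cascade_integral_input_bounded hV hR hE (by fun_prop) hGle
    (by linarith) ha.le (by linarith) hb.le (by linarith) (by linarith) hμgain
  obtain ⟨K, hK⟩ := cascade_norm_sq_bounded hR hE (by fun_prop) hM (by linarith) (by linarith)
  refine ⟨(2 - b) * √K + 1, by nlinarith [Real.sqrt_nonneg K], μ, hμ, fun t ht => ?_⟩
  have hE : Real.exp (μ * t) * ‖e t‖ ≤ √K := by
    rw [← hnorm, ← abs_norm]
    exact Real.abs_le_sqrt (by nlinarith [hK t ht, sq_nonneg ‖Real.exp (μ * t) • r t‖])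
  have hR : Real.exp (μ * t) * ‖r t‖ ≤ √K := by
    rw [← hnorm, ← abs_norm]
    exact Real.abs_le_sqrt (by nlinarith [hK t ht, sq_nonneg ‖Real.exp (μ * t) • e t‖])
  have hx : ‖b • e t + r t‖ ≤ -b * ‖e t‖ + ‖r t‖ := by
    simpa [norm_smul, abs_of_neg hb] using norm_add_le (b • e t) (r t)
  rw [neg_mul, Real.exp_neg, ← div_eq_mul_inv, le_div_iff₀ (Real.exp_pos _)]
  calc (‖e t‖ + ‖b • e t + r t‖) * Real.exp (μ * t)
      ≤ (1 - b) * (Real.exp (μ * t) * ‖e t‖) + Real.exp (μ * t) * ‖r t‖ := by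
        nlinarith [Real.exp_pos (μ * t)]
    _ ≤ (1 - b) * √K + √K := by gcongr; linarith
    _ ≤ (2 - b) * √K + 1 := by linarith

end Cascade

theorem continuous_of_norm_sub_le_mul_sqrt {E G : Type*} [SeminormedAddCommGroup E]
    [SeminormedAddCommGroup G] {L : ℝ} {f : E × E → G}
    (hf : ∀ x y : E × E, ‖f x - f y‖ ≤ L * Real.sqrt (‖x.1 - y.1‖ ^ 2 + ‖x.2 - y.2‖ ^ 2)) :
    Continuous f := by
  refine continuous_iff_continuousAt.2 fun x => tendsto_iff_norm_sub_tendsto_zero.2 <|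
    squeeze_zero (fun _ => norm_nonneg _) (fun y => hf y x) ?_
  have h : Continuous fun y : E × E => L * Real.sqrt (‖y.1 - x.1‖ ^ 2 + ‖y.2 - x.2‖ ^ 2) := by
    fun_prop
  simpa using h.tendsto x

theorem pid_second_order_global_stabilization_general
    (n : ℕ) (L : ℝ) (hL : 0 < L)
    (f : EuclideanSpace ℝ (Fin n) × EuclideanSpace ℝ (Fin n) → EuclideanSpace ℝ (Fin n))
    (hf : ∀ x y : EuclideanSpace ℝ (Fin n) × EuclideanSpace ℝ (Fin n),
      ‖f x - f y‖ ≤ L * Real.sqrt (‖x.1 - y.1‖ ^ 2 + ‖x.2 - y.2‖ ^ 2))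
    (l1 l2 l3 : ℝ) (h1 : l1 < 0) (h2 : l2 < 0) (h3 : l3 < 0)
    (h12 : l1 ≠ l2) (h13 : l1 ≠ l3) (h23 : l2 ≠ l3)
    (hcond : L * phi l1 l2 l3 * hfun l1 l2 l3 < 1)
    (kp ki kd : ℝ)
    (hkp : kp = -(l1 * l2 + l1 * l3 + l2 * l3))
    (hki : ki = l1 * l2 * l3)
    (hkd : kd = l1 + l2 + l3)
    (ystar : EuclideanSpace ℝ (Fin n))
    (x1 x2 : ℝ → EuclideanSpace ℝ (Fin n))
    (hx1 : ∀ t, 0 ≤ t → HasDerivAt x1 (x2 t) t)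
    (hx2 : ∀ t, 0 ≤ t → HasDerivAt x2
      (f (x1 t, x2 t) + kp • (x1 t - ystar)
        + ki • (∫ s in (0:ℝ)..t, (x1 s - ystar))
        + kd • x2 t) t) :
    ∃ C > (0:ℝ), ∃ μ > (0:ℝ), ∀ t, 0 ≤ t →
      ‖x1 t - ystar‖ + ‖x2 t‖ ≤ C * Real.exp (-μ * t) := by
  obtain ⟨a, b, c, ha, hb, hc, hsum, hpair, hprod, hgain⟩ :=
    exists_reordering_gain_le h1 h2 h3 h12 h13 h23
  subst hkp hki hkd
  rw [← hsum, ← hpair, ← hprod] at hx2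
  obtain ⟨v, r, hv, hr, he, hx2r⟩ := exists_cascade_of_pid ha.ne ystar (f (ystar, 0)) hx1 hx2
  have hLgain : L ^ 2 * (1 + 1 / b ^ 2) < c ^ 2 :=
    sq_mul_lt_sq_of_div_le_sq hL.le (mul_nonneg (Real.sqrt_nonneg _) (Real.sqrt_nonneg _))
      (by rwa [← mul_assoc]) hc.ne hgain
  have hfc := continuous_of_norm_sub_le_mul_sqrt hf
  have hx1c := continuousOn_Ici_of_hasDerivAt hx1
  have hx2c := continuousOn_Ici_of_hasDerivAt hx2
  have hgle : ∀ t, 0 ≤ t → ‖f (x1 t, x2 t) - f (ystar, 0)‖ ^ 2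
      ≤ L ^ 2 * (‖x1 t - ystar‖ ^ 2 + ‖b • (x1 t - ystar) + r t‖ ^ 2) := fun t _ => by
    have h := hf (x1 t, x2 t) (ystar, 0)
    simp only [sub_zero] at h
    rw [hx2r t, ← Real.sq_sqrt (by positivity : 0 ≤ ‖x1 t - ystar‖ ^ 2 + ‖x2 t‖ ^ 2), ← mul_pow]
    exact pow_le_pow_left₀ (norm_nonneg _) h 2
  simpa only [hx2r] using cascade_exp_decay hv hr he (by fun_prop) hgle ha hb hc hLgain

theorem pid_second_order_global_stabilization
    (n : ℕ) (hn : 1 ≤ n) (L : ℝ) (hL : 0 < L)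
    (f : EuclideanSpace ℝ (Fin n) × EuclideanSpace ℝ (Fin n) → EuclideanSpace ℝ (Fin n))
    (hf : ∀ x y : EuclideanSpace ℝ (Fin n) × EuclideanSpace ℝ (Fin n),
      ‖f x - f y‖ ≤ L * Real.sqrt (‖x.1 - y.1‖ ^ 2 + ‖x.2 - y.2‖ ^ 2))
    (l1 l2 l3 : ℝ) (h1 : l1 < 0) (h2 : l2 < 0) (h3 : l3 < 0)
    (h12 : l1 ≠ l2) (h13 : l1 ≠ l3) (h23 : l2 ≠ l3)
    (hcond : L * phi l1 l2 l3 * hfun l1 l2 l3 < 1)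
    (kp ki kd : ℝ)
    (hkp : kp = -(l1 * l2 + l1 * l3 + l2 * l3))
    (hki : ki = l1 * l2 * l3)
    (hkd : kd = l1 + l2 + l3)
    (ystar : EuclideanSpace ℝ (Fin n))
    (x1 x2 : ℝ → EuclideanSpace ℝ (Fin n))
    (hx1 : ∀ t, 0 ≤ t → HasDerivAt x1 (x2 t) t)
    (hx2 : ∀ t, 0 ≤ t → HasDerivAt x2
      (f (x1 t, x2 t) + kp • (x1 t - ystar)
        + ki • (∫ s in (0:ℝ)..t, (x1 s - ystar))
        + kd • x2 t) t) :
    ∃ C > (0:ℝ), ∃ μ > (0:ℝ), ∀ t, 0 ≤ t →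
      ‖x1 t - ystar‖ + ‖x2 t‖ ≤ C * Real.exp (-μ * t) :=
  pid_second_order_global_stabilization_general n L hL f hf l1 l2 l3 h1 h2 h3 h12 h13 h23 hcond kp
    ki kd hkp hki hkd ystar x1 x2 hx1 hx2
end

section
/- Let L > 0. For every α with 0 < α < 1/4 and every β > max{5L, 5}, the triple (λ₁, λ₂, λ₃) = (−α, −(1+α), −β) satisfies L·φ(λ₁,λ₂,λ₃)·h(λ₁,λ₂,λ₃) < 1. Consequently, φ(−α,−(1+α),−β) < √(5/β²) and h(−α,−(1+α),−β) < √5 whenever 0 < α < 1/4 and β > 5. -/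
lemma key_phi (α β : ℝ) (h0 : 0 < α) (h1 : α < 1 / 4) (h5 : 5 < β) :
    phi (-α) (-(1 + α)) (-β) < Real.sqrt (5 / β ^ 2) := by
  unfold phi
  apply Real.sqrt_lt_sqrt
  · positivity
  · have hD1 : (0:ℝ) < (-β - -α) ^ 2 := by nlinarith
    have hD2 : (0:ℝ) < (-(1 + α) - -α) ^ 2 := by nlinarith
    have hD3 : (0:ℝ) < (-β - -(1 + α)) ^ 2 := by nlinarith
    have hD : (0:ℝ) < (-β - -α) ^ 2 * (-(1 + α) - -α) ^ 2 * (-β - -(1 + α)) ^ 2 :=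
      mul_pos (mul_pos hD1 hD2) hD3
    have hb : (0:ℝ) < β ^ 2 := by positivity
    rw [div_lt_div_iff₀ hD hb]
    have hs : (0:ℝ) < β - 5 := by linarith
    have ht : (0:ℝ) < 1 / 4 - α := by linarith
    nlinarith [hs, ht, mul_pos hs ht, mul_pos hs hs, mul_pos ht ht,
      mul_pos (mul_pos hs hs) hs, mul_pos (mul_pos hs hs) ht,
      mul_pos (mul_pos hs ht) ht, mul_pos (mul_pos ht ht) ht,
      mul_pos (mul_pos hs hs) (mul_pos hs hs),
      mul_pos (mul_pos hs hs) (mul_pos hs ht),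
      mul_pos (mul_pos hs hs) (mul_pos ht ht),
      mul_pos (mul_pos hs ht) (mul_pos ht ht),
      mul_pos (mul_pos ht ht) (mul_pos ht ht)]

lemma key_h (α β : ℝ) (h0 : 0 < α) (h1 : α < 1 / 4) (h5 : 5 < β) :
    hfun (-α) (-(1 + α)) (-β) < Real.sqrt 5 := by
  unfold hfun
  apply Real.sqrt_lt_sqrt
  · positivity
  · have hb : (25:ℝ) < (-β) ^ 2 := by nlinarith
    have hb0 : (0:ℝ) < (-β) ^ 2 := by linarith
    have : 1 / (-β) ^ 2 < 1 / 25 := by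
      rw [div_lt_div_iff₀ hb0 (by norm_num)]
      linarith
    nlinarith

theorem corollary_gain_manifold (L : ℝ) (hL : 0 < L) :
    (∀ α β : ℝ, 0 < α → α < 1 / 4 → max (5 * L) 5 < β →
      L * phi (-α) (-(1 + α)) (-β) * hfun (-α) (-(1 + α)) (-β) < 1) ∧
    (∀ α β : ℝ, 0 < α → α < 1 / 4 → 5 < β →
      phi (-α) (-(1 + α)) (-β) < Real.sqrt (5 / β ^ 2) ∧
      hfun (-α) (-(1 + α)) (-β) < Real.sqrt 5) := by
  constructor
  · intro α β h0 h1 hβ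
    have h5 : 5 < β := lt_of_le_of_lt (le_max_right _ _) hβ
    have h5L : 5 * L < β := lt_of_le_of_lt (le_max_left _ _) hβ
    have hβ0 : (0:ℝ) < β := by linarith
    have hp := key_phi α β h0 h1 h5
    have hh := key_h α β h0 h1 h5
    have hsq : Real.sqrt (5 / β ^ 2) = Real.sqrt 5 / β := by
      rw [show (5:ℝ) / β ^ 2 = (Real.sqrt 5 / β) ^ 2 from by
        rw [div_pow, Real.sq_sqrt] <;> norm_num,
        Real.sqrt_sq (by positivity)]
    have hφ0 : 0 ≤ phi (-α) (-(1 + α)) (-β) := Real.sqrt_nonneg _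
    have hh0 : 0 ≤ hfun (-α) (-(1 + α)) (-β) := Real.sqrt_nonneg _
    have hprod : phi (-α) (-(1 + α)) (-β) * hfun (-α) (-(1 + α)) (-β) < 5 / β := by
      calc phi (-α) (-(1 + α)) (-β) * hfun (-α) (-(1 + α)) (-β)
          < (Real.sqrt 5 / β) * Real.sqrt 5 :=
            mul_lt_mul'' (hsq ▸ hp) hh hφ0 hh0
        _ = 5 / β := by
            rw [div_mul_eq_mul_div, Real.mul_self_sqrt (by norm_num)]
    have hfin : L * (5 / β) < 1 := by
      rw [show L * (5 / β) = (5 * L) / β from by ring, div_lt_one hβ0]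
      linarith
    calc L * phi (-α) (-(1 + α)) (-β) * hfun (-α) (-(1 + α)) (-β)
        = L * (phi (-α) (-(1 + α)) (-β) * hfun (-α) (-(1 + α)) (-β)) := by ring
      _ < L * (5 / β) := mul_lt_mul_of_pos_left hprod hL
      _ < 1 := hfin
  · intro α β h0 h1 h5
    exact ⟨key_phi α β h0 h1 h5, key_h α β h0 h1 h5⟩
end

section
/- Fix ε > 0, y* ∈ ℝ, and k_p, k_i, k_d ∈ ℝ. There exists an initial value (x₁(0), x₂(0)) ∈ ℝ² with x₁(0) > y* such that: (i) no solution of the closed-loop system with this initial value can be extended to all of [0,∞), i.e. the maximal interval of existence [0,a) is finite; and (ii) every solution (x₁, x₂) on any interval [0,T) with this initial value satisfies e(t) ≥ |e(0)| > 0 for all t ∈ [0,T), where e(t) = x₁(t) − y*. -/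
open Real MeasureTheory intervalIntegral

set_option maxHeartbeats 1000000

/-- `IsSolOn ε ystar kp ki kd x1 x2 T` : `(x1, x2)` solves the closed-loop PID system
`x₁' = x₂`, `x₂' = (x₁² + x₂²)^((1+ε)/2) + k_p e + k_i ∫ e + k_d e'` on `[0, T)`,
where `e(t) = x₁(t) − y*`. -/
def IsSolOn (ε ystar kp ki kd : ℝ) (x1 x2 : ℝ → ℝ) (T : ℝ) : Prop :=
  ∀ t, 0 ≤ t → t < T →
    HasDerivAt x1 (x2 t) t ∧
    HasDerivAt x2 (((x1 t) ^ 2 + (x2 t) ^ 2) ^ ((1 + ε) / 2)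
      + kp * (x1 t - ystar) + ki * (∫ s in (0:ℝ)..t, (x1 s - ystar))
      + kd * x2 t) t

/-- Pointwise key inequality: the superlinear term dominates the PID terms. -/
lemma pid_key_ineq (ε ystar kp ki kd M : ℝ) (hε : 0 < ε) (hM1 : 1 ≤ M)
    (hMy : |ystar| ≤ M) (hMC : 4 * (|kp| + |ki| + |kd|) ≤ M ^ ε)
    (a b I : ℝ) (ha : M ≤ a) (hb : M ≤ b) (hI0 : 0 ≤ I) (hI : I ≤ a - ystar) :
    b ^ (1 + ε) / 2 ≤ (a ^ 2 + b ^ 2) ^ ((1 + ε) / 2)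
      + kp * (a - ystar) + ki * I + kd * b := by
  have hb0 : 0 < b := lt_of_lt_of_le one_pos (le_trans hM1 hb)
  have ha0 : 0 < a := lt_of_lt_of_le one_pos (le_trans hM1 ha)
  have hq : (0:ℝ) ≤ a ^ 2 + b ^ 2 := by positivity
  set r := Real.sqrt (a ^ 2 + b ^ 2) with hrdef
  have hr0 : 0 ≤ r := Real.sqrt_nonneg _
  have hrb : b ≤ r := by
    have h : b = Real.sqrt (b ^ 2) := by
      rw [Real.sqrt_sq hb0.le]
    rw [h]
    exact Real.sqrt_le_sqrt (by nlinarith [sq_nonneg a])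
  have hra : a ≤ r := by
    have h : a = Real.sqrt (a ^ 2) := by
      rw [Real.sqrt_sq ha0.le]
    rw [h]
    exact Real.sqrt_le_sqrt (by nlinarith [sq_nonneg b])
  have hMr : M ≤ r := le_trans hb hrb
  have hrpos : 0 < r := lt_of_lt_of_le (lt_of_lt_of_le one_pos hM1) hMr
  have hpow : (a ^ 2 + b ^ 2) ^ ((1 + ε) / 2) = r * r ^ ε := by
    rw [show (1 + ε) / 2 = 1 / 2 * (1 + ε) by ring, Real.rpow_mul hq,
      ← Real.sqrt_eq_rpow, ← hrdef, Real.rpow_add hrpos, Real.rpow_one]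
  have hre : M ^ ε ≤ r ^ ε := Real.rpow_le_rpow (by linarith) hMr hε.le
  have hbr : b ^ (1 + ε) ≤ r * r ^ ε := by
    have : b ^ (1 + ε) ≤ r ^ (1 + ε) := Real.rpow_le_rpow hb0.le hrb (by linarith)
    rwa [Real.rpow_add hrpos, Real.rpow_one] at this
  -- bounds on the bad terms
  have hyabs1 : -ystar ≤ |ystar| := neg_le_abs _
  have hyabs2 : -|ystar| ≤ ystar := neg_abs_le _
  have habs : |a - ystar| ≤ 2 * r := by
    rw [abs_le]
    constructor
    · linarith
    · linarith
  have h1 : -(|kp| * (2 * r)) ≤ kp * (a - ystar) := by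
    have h := neg_abs_le (kp * (a - ystar))
    rw [abs_mul] at h
    have := mul_le_mul_of_nonneg_left habs (abs_nonneg kp)
    linarith
  have h2 : -(|ki| * (2 * r)) ≤ ki * I := by
    have h := neg_abs_le (ki * I)
    rw [abs_mul] at h
    have hIabs : |I| ≤ 2 * r := by
      rw [abs_of_nonneg hI0]
      linarith
    have := mul_le_mul_of_nonneg_left hIabs (abs_nonneg ki)
    linarith
  have h3 : -(|kd| * (2 * r)) ≤ kd * b := by
    have h := neg_abs_le (kd * b)
    rw [abs_mul] at h
    have hbabs : |b| ≤ 2 * r := by rw [abs_of_nonneg hb0.le]; linarith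
    have := mul_le_mul_of_nonneg_left hbabs (abs_nonneg kd)
    linarith
  rw [hpow]
  have hkey : (M ^ ε) * r ≤ r ^ ε * r := mul_le_mul_of_nonneg_right hre hr0
  have hC4 : 4 * (|kp| + |ki| + |kd|) * r ≤ M ^ ε * r := mul_le_mul_of_nonneg_right hMC hr0
  linarith

/-- The derivative lower bound at a time `t`, given invariance up to `t`. -/
lemma pid_step (ε ystar kp ki kd M T : ℝ) (hε : 0 < ε) (hM1 : 1 ≤ M)
    (hMy : |ystar| ≤ M) (hMC : 4 * (|kp| + |ki| + |kd|) ≤ M ^ ε)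
    (x1 x2 : ℝ → ℝ) (hsol : IsSolOn ε ystar kp ki kd x1 x2 T)
    (h10 : x1 0 = M)
    (t : ℝ) (ht0 : 0 ≤ t) (htT : t < T) (ht1 : t ≤ 1)
    (hx2 : ∀ s, 0 ≤ s → s < t → M ≤ x2 s) (hx2t : M ≤ x2 t) :
    (x2 t) ^ (1 + ε) / 2 ≤ ((x1 t) ^ 2 + (x2 t) ^ 2) ^ ((1 + ε) / 2)
      + kp * (x1 t - ystar) + ki * (∫ s in (0:ℝ)..t, (x1 s - ystar))
      + kd * x2 t := by
  have hx1cont : ContinuousOn x1 (Set.Icc 0 t) := fun s hs =>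
    ((hsol s hs.1 (lt_of_le_of_lt hs.2 htT)).1.continuousAt).continuousWithinAt
  have hx1mono : MonotoneOn x1 (Set.Icc 0 t) := by
    apply monotoneOn_of_deriv_nonneg (convex_Icc 0 t) hx1cont
    · intro s hs
      rw [interior_Icc] at hs
      exact ((hsol s hs.1.le (lt_of_lt_of_le hs.2 htT.le)).1.differentiableAt).differentiableWithinAt
    · intro s hs
      rw [interior_Icc] at hs
      rw [(hsol s hs.1.le (lt_of_lt_of_le hs.2 htT.le)).1.deriv]
      have := hx2 s hs.1.le hs.2
      linarith
  have hx1low : ∀ s, s ∈ Set.Icc (0:ℝ) t → M ≤ x1 s := by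
    intro s hs
    calc M = x1 0 := h10.symm
    _ ≤ x1 s := hx1mono ⟨le_refl 0, ht0⟩ hs hs.1
  have hx1t : M ≤ x1 t := hx1low t ⟨ht0, le_refl t⟩
  have hint : IntervalIntegrable (fun s => x1 s - ystar) volume 0 t := by
    apply ContinuousOn.intervalIntegrable
    rw [Set.uIcc_of_le ht0]
    exact hx1cont.sub continuousOn_const
  have hystar : ystar ≤ M := le_trans (le_abs_self _) hMy
  have hI0 : 0 ≤ ∫ s in (0:ℝ)..t, (x1 s - ystar) := by
    apply intervalIntegral.integral_nonneg ht0
    intro u hu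
    have := hx1low u hu
    linarith
  have hIle : (∫ s in (0:ℝ)..t, (x1 s - ystar)) ≤ x1 t - ystar := by
    have h1 : (∫ s in (0:ℝ)..t, (x1 s - ystar))
        ≤ ∫ _ in (0:ℝ)..t, (x1 t - ystar) := by
      apply intervalIntegral.integral_mono_on ht0 hint intervalIntegrable_const
      intro u hu
      have := hx1mono hu ⟨ht0, le_refl t⟩ hu.2
      linarith
    rw [intervalIntegral.integral_const, smul_eq_mul] at h1
    have he : 0 ≤ x1 t - ystar := by linarith
    nlinarith
  exact pid_key_ineq ε ystar kp ki kd M hε hM1 hMy hMC (x1 t) (x2 t) _ hx1t hx2t hI0 hIle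

/-- Invariance: `x2` stays at least `M` on `[0, min T 1]`. -/
lemma pid_invariant (ε ystar kp ki kd M T : ℝ) (hε : 0 < ε) (hM1 : 1 ≤ M)
    (hMy : |ystar| ≤ M) (hMC : 4 * (|kp| + |ki| + |kd|) ≤ M ^ ε)
    (x1 x2 : ℝ → ℝ) (hsol : IsSolOn ε ystar kp ki kd x1 x2 T)
    (h10 : x1 0 = M) (h20 : x2 0 = M) :
    ∀ t, 0 ≤ t → t < T → t ≤ 1 → M ≤ x2 t := by
  by_contra hcon
  push_neg at hcon
  obtain ⟨t₀, ht₀0, ht₀T, ht₀1, ht₀M⟩ := hcon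
  set S : Set ℝ := {t | 0 ≤ t ∧ t < T ∧ t ≤ 1 ∧ x2 t < M} with hSdef
  have hSne : S.Nonempty := ⟨t₀, ht₀0, ht₀T, ht₀1, ht₀M⟩
  have hbdd : BddBelow S := ⟨0, fun t ht => ht.1⟩
  set τ := sInf S with hτdef
  have hτ0 : 0 ≤ τ := le_csInf hSne fun t ht => ht.1
  have hτt₀ : τ ≤ t₀ := csInf_le hbdd ⟨ht₀0, ht₀T, ht₀1, ht₀M⟩
  have hτT : τ < T := lt_of_le_of_lt hτt₀ ht₀T
  have hτ1 : τ ≤ 1 := le_trans hτt₀ ht₀1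
  have hpre : ∀ s, 0 ≤ s → s < τ → M ≤ x2 s := by
    intro s hs0 hsτ
    by_contra hx
    exact absurd (csInf_le hbdd ⟨hs0, lt_trans hsτ hτT, le_trans hsτ.le hτ1, not_le.mp hx⟩)
      (not_le.mpr hsτ)
  have hx2τ : M ≤ x2 τ := by
    rcases eq_or_lt_of_le hτ0 with h | h
    · rw [← h, h20]
    · have hcont : ContinuousOn x2 (Set.Icc 0 τ) := fun s hs =>
        ((hsol s hs.1 (lt_of_le_of_lt hs.2 hτT)).2.continuousAt).continuousWithinAt
      have hsm : StrictMonoOn x2 (Set.Icc 0 τ) := by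
        apply strictMonoOn_of_deriv_pos (convex_Icc 0 τ) hcont
        intro s hs
        rw [interior_Icc] at hs
        have hD := (hsol s hs.1.le (lt_trans hs.2 hτT)).2
        rw [hD.deriv]
        have hstep := pid_step ε ystar kp ki kd M T hε hM1 hMy hMC x1 x2 hsol h10 s
          hs.1.le (lt_trans hs.2 hτT) (le_trans hs.2.le hτ1)
          (fun u hu0 hus => hpre u hu0 (lt_trans hus hs.2)) (hpre s hs.1.le hs.2)
        have hpos : 0 < (x2 s) ^ (1 + ε) / 2 := by
          have : 0 < x2 s := lt_of_lt_of_le one_pos (le_trans hM1 (hpre s hs.1.le hs.2))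
          positivity
        linarith
      have := hsm ⟨le_refl 0, hτ0⟩ ⟨hτ0, le_refl τ⟩ h
      rw [h20] at this
      linarith
  -- the derivative of x2 at τ is positive
  have hDτ := (hsol τ hτ0 hτT).2
  have hstepτ := pid_step ε ystar kp ki kd M T hε hM1 hMy hMC x1 x2 hsol h10 τ
    hτ0 hτT hτ1 hpre hx2τ
  have hx2τpos : 0 < x2 τ := lt_of_lt_of_le one_pos (le_trans hM1 hx2τ)
  have hDpos : 0 < ((x1 τ) ^ 2 + (x2 τ) ^ 2) ^ ((1 + ε) / 2)
      + kp * (x1 τ - ystar) + ki * (∫ s in (0:ℝ)..τ, (x1 s - ystar)) + kd * x2 τ := by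
    have : 0 < (x2 τ) ^ (1 + ε) / 2 := by positivity
    linarith
  -- x2 increases strictly to the right of τ
  have hslope := hasDerivAt_iff_tendsto_slope.mp hDτ
  have hev1 : ∀ᶠ u in nhdsWithin τ {τ}ᶜ, 0 < slope x2 τ u :=
    hslope.eventually (eventually_gt_nhds hDpos)
  have hev : ∀ᶠ u in nhdsWithin τ (Set.Ioi τ), x2 τ < x2 u := by
    have hev2 : ∀ᶠ u in nhdsWithin τ (Set.Ioi τ), 0 < slope x2 τ u :=
      hev1.filter_mono (nhdsWithin_mono τ (fun u hu =>
        Set.mem_compl_singleton_iff.mpr (ne_of_gt hu)))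
    filter_upwards [hev2, self_mem_nhdsWithin] with u hu humem
    have huτ : 0 < u - τ := sub_pos.mpr humem
    have := mul_pos hu huτ
    rw [slope_def_field] at this
    have h4 : (x2 u - x2 τ) / (u - τ) * (u - τ) = x2 u - x2 τ :=
      div_mul_cancel₀ _ (ne_of_gt huτ)
    rw [h4] at this
    linarith
  obtain ⟨u, humem, hsub⟩ := mem_nhdsGT_iff_exists_Ioo_subset.mp hev
  obtain ⟨t, htS, htu⟩ := exists_lt_of_csInf_lt hSne (show sInf S < u from humem)
  have hτt : τ ≤ t := csInf_le hbdd htS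
  rcases eq_or_lt_of_le hτt with h | h
  · exact absurd hx2τ (not_le.mpr (h ▸ htS.2.2.2))
  · have : x2 τ < x2 t := hsub ⟨h, htu⟩
    have := htS.2.2.2
    linarith

/-- Any solution blows up: `T ≤ 1/2`. -/
lemma pid_Tle (ε ystar kp ki kd M T : ℝ) (hε : 0 < ε) (hM1 : 1 ≤ M)
    (hMy : |ystar| ≤ M) (hMC : 4 * (|kp| + |ki| + |kd|) ≤ M ^ ε)
    (hMε : 8 ≤ ε * M ^ ε)
    (x1 x2 : ℝ → ℝ) (hsol : IsSolOn ε ystar kp ki kd x1 x2 T)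
    (h10 : x1 0 = M) (h20 : x2 0 = M) :
    T ≤ 1 / 2 := by
  by_contra hT
  push_neg at hT
  have hM0 : (0:ℝ) < M := lt_of_lt_of_le one_pos hM1
  have hinv := pid_invariant ε ystar kp ki kd M T hε hM1 hMy hMC x1 x2 hsol h10 h20
  set φ : ℝ → ℝ := fun t => x2 t ^ (-ε) + ε / 2 * t with hφdef
  have hmem : ∀ s, s ∈ Set.Icc (0:ℝ) (1/2) → 0 ≤ s ∧ s < T ∧ s ≤ 1 := by
    intro s hs
    exact ⟨hs.1, lt_of_le_of_lt hs.2 hT, le_trans hs.2 (by norm_num)⟩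
  have hderφ : ∀ s, s ∈ Set.Icc (0:ℝ) (1/2) →
      HasDerivAt φ ((-ε * x2 s ^ (-ε - 1)) *
        (((x1 s) ^ 2 + (x2 s) ^ 2) ^ ((1 + ε) / 2)
          + kp * (x1 s - ystar) + ki * (∫ u in (0:ℝ)..s, (x1 u - ystar))
          + kd * x2 s) + ε / 2 * 1) s := by
    intro s hs
    obtain ⟨hs0, hsT, hs1⟩ := hmem s hs
    have hx2s : M ≤ x2 s := hinv s hs0 hsT hs1
    have hx2spos : 0 < x2 s := lt_of_lt_of_le hM0 hx2s
    have houter : HasDerivAt (fun y : ℝ => y ^ (-ε)) (-ε * x2 s ^ (-ε - 1)) (x2 s) :=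
      Real.hasDerivAt_rpow_const (Or.inl (ne_of_gt hx2spos))
    have hcomp := houter.comp s (hsol s hs0 hsT).2
    exact hcomp.add ((hasDerivAt_id s).const_mul (ε / 2))
  have hcont : ContinuousOn φ (Set.Icc 0 (1/2)) := fun s hs =>
    ((hderφ s hs).continuousAt).continuousWithinAt
  have hanti : AntitoneOn φ (Set.Icc 0 (1/2)) := by
    apply antitoneOn_of_deriv_nonpos (convex_Icc 0 (1/2)) hcont
    · intro s hs
      rw [interior_Icc] at hs
      exact ((hderφ s ⟨hs.1.le, hs.2.le⟩).differentiableAt).differentiableWithinAt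
    · intro s hs
      rw [interior_Icc] at hs
      have hs' : s ∈ Set.Icc (0:ℝ) (1/2) := ⟨hs.1.le, hs.2.le⟩
      rw [(hderφ s hs').deriv]
      obtain ⟨hs0, hsT, hs1⟩ := hmem s hs'
      have hx2s : M ≤ x2 s := hinv s hs0 hsT hs1
      have hx2spos : 0 < x2 s := lt_of_lt_of_le hM0 hx2s
      have hstep := pid_step ε ystar kp ki kd M T hε hM1 hMy hMC x1 x2 hsol h10 s
        hs0 hsT hs1 (fun u hu0 hus => hinv u hu0 (lt_trans hus hsT) (le_trans hus.le hs1))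
        hx2s
      have hcancel : x2 s ^ (-ε - 1) * x2 s ^ (1 + ε) = 1 := by
        rw [← Real.rpow_add hx2spos, show -ε - 1 + (1 + ε) = 0 by ring, Real.rpow_zero]
      have hppos : 0 < x2 s ^ (-ε - 1) := Real.rpow_pos_of_pos hx2spos _
      have hmul := mul_le_mul_of_nonneg_left hstep (le_of_lt (mul_pos hε hppos))
      nlinarith [hmul, hcancel]
  have hφhalf : φ (1/2) ≤ φ 0 := hanti (by constructor <;> norm_num)
    (by constructor <;> norm_num) (by norm_num)
  have hφ0 : φ 0 = M ^ (-ε) := by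
    simp [hφdef, h20]
  have hhalf : (0:ℝ) < x2 (1/2) ^ (-ε) := by
    have h := hinv (1/2) (by norm_num) hT (by norm_num)
    exact Real.rpow_pos_of_pos (lt_of_lt_of_le hM0 h) _
  have hlt : ε / 4 < M ^ (-ε) := by
    have heq : φ (1/2) = x2 (1/2) ^ (-ε) + ε / 2 * (1/2) := rfl
    rw [heq, hφ0] at hφhalf
    linarith
  -- but M ^ (-ε) ≤ ε / 8, contradiction
  have hidpow : M ^ (-ε) * M ^ ε = 1 := by
    rw [← Real.rpow_add hM0]
    norm_num
  have hppos : 0 < M ^ ε := Real.rpow_pos_of_pos hM0 _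
  nlinarith [mul_lt_mul_of_pos_right hlt hppos, hidpow, hMε, hε]

theorem pid_fails_superlinear_growth
    (ε ystar kp ki kd : ℝ) (hε : 0 < ε) :
    ∃ x10 x20 : ℝ, ystar < x10 ∧
      -- (i) there is no global solution on [0, ∞)
      (¬ ∃ x1 x2 : ℝ → ℝ, x1 0 = x10 ∧ x2 0 = x20 ∧
        ∀ t : ℝ, 0 ≤ t →
          HasDerivAt x1 (x2 t) t ∧
          HasDerivAt x2 (((x1 t) ^ 2 + (x2 t) ^ 2) ^ ((1 + ε) / 2)
            + kp * (x1 t - ystar) + ki * (∫ s in (0:ℝ)..t, (x1 s - ystar))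
            + kd * x2 t) t) ∧
      -- (ii) every solution on any interval [0, T) keeps e(t) ≥ |e(0)| > 0
      (∀ T : ℝ, ∀ x1 x2 : ℝ → ℝ, x1 0 = x10 → x2 0 = x20 →
        IsSolOn ε ystar kp ki kd x1 x2 T →
        ∀ t, 0 ≤ t → t < T →
          |x10 - ystar| ≤ x1 t - ystar ∧ 0 < |x10 - ystar|) := by
  obtain ⟨K, hKdef⟩ : ∃ K : ℝ, K = 4 * (|kp| + |ki| + |kd|) + 8 / ε + 1 := ⟨_, rfl⟩
  have hK0 : 0 < K := by
    rw [hKdef]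
    have : 0 < 8 / ε := by positivity
    have h1 : 0 ≤ |kp| + |ki| + |kd| := by positivity
    linarith
  obtain ⟨M, hMdef⟩ : ∃ M : ℝ, M = K ^ (1/ε) + |ystar| + 1 := ⟨_, rfl⟩
  have hKr0 : 0 ≤ K ^ (1/ε) := Real.rpow_nonneg hK0.le _
  have hM1 : 1 ≤ M := by
    have := abs_nonneg ystar
    rw [hMdef]; linarith
  have hMy : |ystar| ≤ M := by rw [hMdef]; linarith
  have hM0 : (0:ℝ) < M := lt_of_lt_of_le one_pos hM1
  have hMK : K ≤ M ^ ε := by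
    have h1 : K ^ (1/ε) ≤ M := by
      have := abs_nonneg ystar
      rw [hMdef]; linarith
    have h2 : (K ^ (1/ε)) ^ ε ≤ M ^ ε := Real.rpow_le_rpow hKr0 h1 hε.le
    rwa [one_div, Real.rpow_inv_rpow hK0.le (ne_of_gt hε)] at h2
  have hMC : 4 * (|kp| + |ki| + |kd|) ≤ M ^ ε := by
    have : 0 < 8 / ε := by positivity
    rw [hKdef] at hMK
    linarith
  have hMε : 8 ≤ ε * M ^ ε := by
    have h8 : 8 / ε ≤ M ^ ε := by
      have h1 : 0 ≤ |kp| + |ki| + |kd| := by positivity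
      rw [hKdef] at hMK
      linarith
    have := mul_le_mul_of_nonneg_left h8 hε.le
    rwa [mul_div_cancel₀ 8 (ne_of_gt hε)] at this
  have hystarM : ystar < M := lt_of_le_of_lt (le_abs_self _)
    (lt_of_lt_of_le (by linarith [abs_nonneg ystar] : |ystar| < |ystar| + 1)
      (by rw [hMdef]; linarith))
  refine ⟨M, M, hystarM, ?_, ?_⟩
  · rintro ⟨x1, x2, h10, h20, hglob⟩
    have hsol : IsSolOn ε ystar kp ki kd x1 x2 1 := fun t ht _ => hglob t ht
    have := pid_Tle ε ystar kp ki kd M 1 hε hM1 hMy hMC hMε x1 x2 hsol h10 h20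
    norm_num at this
  · intro T x1 x2 h10 h20 hsol t ht0 htT
    have hTle : T ≤ 1/2 := pid_Tle ε ystar kp ki kd M T hε hM1 hMy hMC hMε x1 x2 hsol h10 h20
    have ht1 : t ≤ 1 := by linarith
    have hinv := pid_invariant ε ystar kp ki kd M T hε hM1 hMy hMC x1 x2 hsol h10 h20
    -- x1 is monotone on [0, t], hence x1 t ≥ M
    have hx1cont : ContinuousOn x1 (Set.Icc 0 t) := fun s hs =>
      ((hsol s hs.1 (lt_of_le_of_lt hs.2 htT)).1.continuousAt).continuousWithinAt
    have hx1mono : MonotoneOn x1 (Set.Icc 0 t) := by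
      apply monotoneOn_of_deriv_nonneg (convex_Icc 0 t) hx1cont
      · intro s hs
        rw [interior_Icc] at hs
        exact ((hsol s hs.1.le (lt_of_lt_of_le hs.2 htT.le)).1.differentiableAt).differentiableWithinAt
      · intro s hs
        rw [interior_Icc] at hs
        rw [(hsol s hs.1.le (lt_of_lt_of_le hs.2 htT.le)).1.deriv]
        have := hinv s hs.1.le (lt_of_lt_of_le hs.2 htT.le) (le_trans hs.2.le ht1)
        linarith
    have hx1t : M ≤ x1 t := by
      calc M = x1 0 := h10.symm
      _ ≤ x1 t := hx1mono ⟨le_refl 0, ht0⟩ ⟨ht0, le_refl t⟩ ht0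
    have habs : |M - ystar| = M - ystar := abs_of_pos (by linarith)
    constructor
    · rw [habs]; linarith
    · rw [habs]; linarith
end

section
/- Fix 0 < ε ≤ 1, y* ∈ ℝ, and k_p, k_i, k_d ∈ ℝ. There exists an initial value (x₁(0), x₂(0)) ∈ ℝ² such that any maximal (non-extendable) solution (x₁, x₂) of the closed-loop system with this initial value is defined on a finite interval [0,a) with a < ∞, and the error e(t) = x₁(t) − y* satisfies lim_{t → a⁻} e(t) = ∞. -/
/-!
Start at `x₁(0) = y* + M`, `x₂(0) = M` with `M ^ ε = 18 (1 + |k_p| + |k_i| + |k_d|)`. In the state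
`(x₁, x₂, ∫ e)` the region `M ≤ x₂`, `M ≤ e ≤ 2 x₂`, `0 ≤ ∫ e ≤ 3 e` is forward invariant: there
`(x₁² + x₂²)^((1+ε)/2) ≥ x₂^(1+ε)` dominates the PID terms, so `x₂' ≥ x₂^(1+ε) / 2` and the field
points strictly into the region across each of its faces. This superlinear growth bounds every
interval of existence by `2 M^(-ε) / ε`. On a maximal interval `[0, a)` the error is increasing. If
it stayed bounded, then `(x₁² + x₂²)^((1+ε)/2) ≤ x₁² + x₂²` would give `x₂' ≤ C x₂² = C x₂ x₁'`,
so `log x₂` would stay bounded, the monotone state would converge as `t → a⁻`, and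
Picard–Lindelöf at the limit would extend the solution beyond `a`.
-/

open Real MeasureTheory intervalIntegral Filter

open Set Topology

lemma HasDerivAt.fst {E F : Type*} [NormedAddCommGroup E] [NormedSpace ℝ E]
    [NormedAddCommGroup F] [NormedSpace ℝ F] {g : ℝ → E × F} {d : E × F} {t : ℝ}
    (hg : HasDerivAt g d t) : HasDerivAt (fun u => (g u).1) d.1 t :=
  (ContinuousLinearMap.fst ℝ E F).hasFDerivAt.comp_hasDerivAt t hg

lemma HasDerivAt.snd {E F : Type*} [NormedAddCommGroup E] [NormedSpace ℝ E]
    [NormedAddCommGroup F] [NormedSpace ℝ F] {g : ℝ → E × F} {d : E × F} {t : ℝ}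
    (hg : HasDerivAt g d t) : HasDerivAt (fun u => (g u).2) d.2 t :=
  (ContinuousLinearMap.snd ℝ E F).hasFDerivAt.comp_hasDerivAt t hg

lemma HasDerivAt.eventually_lt_nhdsGT {f : ℝ → ℝ} {f' x : ℝ} (hf : HasDerivAt f f' x)
    (hf' : 0 < f') : ∀ᶠ y in 𝓝[>] x, f x < f y := by
  have hslope := (hasDerivAt_iff_tendsto_slope.mp hf).mono_left
    (nhdsWithin_mono x fun y (hy : x < y) => hy.ne')
  filter_upwards [hslope.eventually (eventually_gt_nhds hf'), self_mem_nhdsWithin]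
    with y hy hxy
  exact (slope_pos_iff_of_le (le_of_lt hxy)).mp hy

lemma HasDerivAt.eventually_le_nhdsGT {f g : ℝ → ℝ} {f' g' x : ℝ} (hf : HasDerivAt f f' x)
    (hg : HasDerivAt g g' x) (hle : f x ≤ g x) (hlt : f' < g') :
    ∀ᶠ y in 𝓝[>] x, f y ≤ g y := by
  filter_upwards [(hg.sub hf).eventually_lt_nhdsGT (sub_pos.mpr hlt)] with y hy
  simp only [Pi.sub_apply] at hy
  linarith

lemma monotoneOn_of_hasDerivAt_nonneg {D : Set ℝ} (hD : Convex ℝ D) {f f' : ℝ → ℝ}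
    (hf : ∀ x ∈ D, HasDerivAt f (f' x) x) (hf' : ∀ x ∈ D, 0 ≤ f' x) : MonotoneOn f D :=
  monotoneOn_of_hasDerivWithinAt_nonneg hD (fun x hx => (hf x hx).continuousAt.continuousWithinAt)
    (fun x hx => (hf x (interior_subset hx)).hasDerivWithinAt)
    fun x hx => hf' x (interior_subset hx)

lemma antitoneOn_of_hasDerivAt_nonpos {D : Set ℝ} (hD : Convex ℝ D) {f f' : ℝ → ℝ}
    (hf : ∀ x ∈ D, HasDerivAt f (f' x) x) (hf' : ∀ x ∈ D, f' x ≤ 0) : AntitoneOn f D :=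
  antitoneOn_of_hasDerivWithinAt_nonpos hD (fun x hx => (hf x hx).continuousAt.continuousWithinAt)
    (fun x hx => (hf x (interior_subset hx)).hasDerivWithinAt)
    fun x hx => hf' x (interior_subset hx)

lemma MonotoneOn.exists_tendsto_nhdsLT {f : ℝ → ℝ} {a b : ℝ} (hab : b < a)
    (hf : MonotoneOn f (Ico b a)) (hbdd : BddAbove (f '' Ico b a)) :
    ∃ l, Tendsto f (𝓝[<] a) (𝓝 l) :=
  ⟨_, (hf.mono Ioo_subset_Ico_self).tendsto_nhdsWithin_Ioo_left (nonempty_Ioo.mpr hab)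
    (hbdd.mono (image_mono Ioo_subset_Ico_self))⟩

lemma MonotoneOn.tendsto_nhdsLT_atTop {f : ℝ → ℝ} {a b : ℝ} (hf : MonotoneOn f (Ico b a))
    (hbdd : ¬BddAbove (f '' Ico b a)) : Tendsto f (𝓝[<] a) atTop := by
  refine tendsto_atTop.mpr fun C => ?_
  obtain ⟨_, ⟨s, hs, rfl⟩, hCs⟩ := not_bddAbove_iff.mp hbdd C
  filter_upwards [Ioo_mem_nhdsLT hs.2] with t ht
  exact hCs.le.trans (hf hs ⟨hs.1.trans ht.1.le, ht.2⟩ ht.1.le)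

lemma exists_tendsto_nhdsLT_of_monotoneOn {γ : ℝ → ℝ × ℝ × ℝ} {a b : ℝ} (hab : b < a)
    (hγ : MonotoneOn γ (Ico b a)) (hbdd : BddAbove (γ '' Ico b a)) :
    ∃ q, Tendsto γ (𝓝[<] a) (𝓝 q) := by
  have hcoord : ∀ f : ℝ × ℝ × ℝ → ℝ, Monotone f → ∃ l, Tendsto (f ∘ γ) (𝓝[<] a) (𝓝 l) :=
    fun f hf => (hf.comp_monotoneOn hγ).exists_tendsto_nhdsLT hab
      (by rw [image_comp]; exact hf.map_bddAbove hbdd)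
  obtain ⟨l₁, h₁⟩ := hcoord Prod.fst monotone_fst
  obtain ⟨l₂, h₂⟩ := hcoord (fun q => q.2.1) (monotone_fst.comp monotone_snd)
  obtain ⟨l₃, h₃⟩ := hcoord (fun q => q.2.2) (monotone_snd.comp monotone_snd)
  exact ⟨(l₁, l₂, l₃), h₁.prodMk_nhds (h₂.prodMk_nhds h₃)⟩

lemma mul_lt_rpow_neg_of_hasDerivAt {y y' : ℝ → ℝ} {c ε T : ℝ} (hε : 0 ≤ ε)
    (hy : ∀ t ∈ Ico 0 T, HasDerivAt y (y' t) t) (hpos : ∀ t ∈ Ico 0 T, 0 < y t)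
    (hy' : ∀ t ∈ Ico 0 T, c * y t ^ (1 + ε) ≤ y' t) :
    ∀ t ∈ Ico 0 T, c * ε * t < y 0 ^ (-ε) := by
  intro t ht
  have hanti : AntitoneOn (fun s => y s ^ (-ε) + c * ε * s) (Ico 0 T) := by
    refine antitoneOn_of_hasDerivAt_nonpos (convex_Ico 0 T) (fun s hs =>
      ((hy s hs).rpow_const (Or.inl (hpos s hs).ne')).add ((hasDerivAt_id s).const_mul (c * ε)))
      fun s hs => ?_
    have hys := hpos s hs
    have hc : c ≤ y' s * y s ^ (-ε - 1) :=
      calc c = c * y s ^ (1 + ε) * y s ^ (-ε - 1) := by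
            rw [mul_assoc, ← rpow_add hys, show 1 + ε + (-ε - 1) = (0:ℝ) by ring, rpow_zero,
              mul_one]
        _ ≤ y' s * y s ^ (-ε - 1) :=
            mul_le_mul_of_nonneg_right (hy' s hs) (rpow_pos_of_pos hys _).le
    nlinarith
  have h := hanti ⟨le_rfl, ht.1.trans_lt ht.2⟩ ht ht.1
  simp only [mul_zero, add_zero] at h
  linarith [rpow_pos_of_pos (hpos t ht) (-ε)]

lemma le_mul_exp_of_hasDerivAt {x y y' : ℝ → ℝ} {C T : ℝ}
    (hx : ∀ t ∈ Ico 0 T, HasDerivAt x (y t) t) (hy : ∀ t ∈ Ico 0 T, HasDerivAt y (y' t) t)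
    (hpos : ∀ t ∈ Ico 0 T, 0 < y t) (hy' : ∀ t ∈ Ico 0 T, y' t ≤ C * y t ^ 2) :
    ∀ t ∈ Ico 0 T, y t ≤ y 0 * exp (C * (x t - x 0)) := by
  intro t ht
  have h0 : (0:ℝ) ∈ Ico 0 T := ⟨le_rfl, ht.1.trans_lt ht.2⟩
  have hanti : AntitoneOn (fun s => log (y s) - C * x s) (Ico 0 T) := by
    refine antitoneOn_of_hasDerivAt_nonpos (convex_Ico 0 T) (fun s hs =>
      ((hy s hs).log (hpos s hs).ne').sub ((hx s hs).const_mul C)) fun s hs => ?_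
    rw [sub_nonpos, div_le_iff₀ (hpos s hs)]
    nlinarith [hy' s hs]
  have h := hanti h0 ht ht.1
  calc y t = exp (log (y t)) := (exp_log (hpos t ht)).symm
    _ ≤ exp (log (y 0) + C * (x t - x 0)) := exp_le_exp.mpr (by simp only at h; linarith)
    _ = y 0 * exp (C * (x t - x 0)) := by rw [exp_add, exp_log (hpos 0 h0)]

lemma hasDerivAt_ite_of_tendsto {E : Type*} [NormedAddCommGroup E] [NormedSpace ℝ E]
    {u u' v : ℝ → E} {a : ℝ} {d : E} (hu : ∀ᶠ t in 𝓝[<] a, HasDerivAt u (u' t) t)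
    (hu' : Tendsto u' (𝓝[<] a) (𝓝 d)) (hlim : Tendsto u (𝓝[<] a) (𝓝 (v a)))
    (hv : HasDerivWithinAt v d (Ici a) a) :
    HasDerivAt (fun t => if t < a then u t else v t) d a := by
  set w := fun t => if t < a then u t else v t
  have hw : ∀ t < a, HasDerivAt u (u' t) t → HasDerivAt w (u' t) t := fun t ht h =>
    h.congr_of_eventuallyEq (by filter_upwards [Iio_mem_nhds ht] with s hs using if_pos hs)
  set s := {t | t < a ∧ HasDerivAt u (u' t) t}
  have hs : s ∈ 𝓝[<] a := inter_mem self_mem_nhdsWithin hu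
  have hleft : HasDerivWithinAt w d (Iic a) a := by
    refine hasDerivWithinAt_Iic_of_tendsto_deriv
      (fun t ht => (hw t ht.1 ht.2).differentiableAt.differentiableWithinAt) ?_ hs
      (hu'.congr' (by filter_upwards [hs] with t ht using (hw t ht.1 ht.2).deriv.symm))
    rw [ContinuousWithinAt, show w a = v a from if_neg (lt_irrefl a)]
    exact (hlim.mono_left (nhdsWithin_mono _ fun t ht => ht.1)).congr'
      (eventually_nhdsWithin_of_forall fun t ht => (if_pos ht.1).symm)
  have hright : HasDerivWithinAt w d (Ici a) a :=
    hv.congr_of_mem (fun t ht => if_neg (not_lt.mpr ht)) (mem_Ici.mpr le_rfl)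
  simpa using hleft.union hright

section PID

variable {ε ystar kp ki kd M a : ℝ} {x1 x2 : ℝ → ℝ}

/-- The closed loop as an autonomous system in the state `(x₁, x₂, ∫ e)`. -/
noncomputable def pidField (ε ystar kp ki kd : ℝ) (q : ℝ × ℝ × ℝ) : ℝ × ℝ × ℝ :=
  (q.2.1, (q.1 ^ 2 + q.2.1 ^ 2) ^ ((1 + ε) / 2) + kp * (q.1 - ystar) + ki * q.2.2 + kd * q.2.1,
    q.1 - ystar)

/-- The integrand is frozen at its value at `0` for negative times, so that the state of a
solution is differentiable at `t = 0`. -/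
noncomputable def pidState (ystar : ℝ) (x1 x2 : ℝ → ℝ) (t : ℝ) : ℝ × ℝ × ℝ :=
  (x1 t, x2 t, ∫ s in (0:ℝ)..t, (x1 (max s 0) - ystar))

def pidRegion (ystar M : ℝ) : Set (ℝ × ℝ × ℝ) :=
  {q | M ≤ q.2.1 ∧ M ≤ q.1 - ystar ∧ 0 ≤ q.2.2 ∧ q.2.2 ≤ 3 * (q.1 - ystar) ∧
    q.1 - ystar ≤ 2 * q.2.1}

lemma contDiffAt_pidField {q : ℝ × ℝ × ℝ} (hq : q.1 ^ 2 + q.2.1 ^ 2 ≠ 0) :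
    ContDiffAt ℝ 1 (pidField ε ystar kp ki kd) q := by
  have hrpow : ContDiffAt ℝ 1 (fun q : ℝ × ℝ × ℝ => (q.1 ^ 2 + q.2.1 ^ 2) ^ ((1 + ε) / 2)) q :=
    ContDiffAt.rpow_const_of_ne (by fun_prop) hq
  unfold pidField
  fun_prop

lemma isClosed_pidRegion : IsClosed (pidRegion ystar M) := by
  simp only [pidRegion, ofPred_and]
  apply_rules [IsClosed.inter, isClosed_le] <;> fun_prop

lemma isSolOn_of_hasDerivAt_pidField {γ : ℝ → ℝ × ℝ × ℝ} {b : ℝ} (h0 : (γ 0).2.2 = 0)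
    (hγ : ∀ t ∈ Ico 0 b, HasDerivAt γ (pidField ε ystar kp ki kd (γ t)) t) :
    IsSolOn ε ystar kp ki kd (fun t => (γ t).1) (fun t => (γ t).2.1) b := by
  intro t ht0 htb
  have hsub : uIcc 0 t ⊆ Ico 0 b := by
    rw [uIcc_of_le ht0]; exact Icc_subset_Ico_right htb
  have hint : ∫ s in (0:ℝ)..t, ((γ s).1 - ystar) = (γ t).2.2 := by
    rw [integral_eq_sub_of_hasDerivAt (f' := fun s => (γ s).1 - ystar)
      (fun s hs => (hγ s (hsub hs)).snd.snd), h0, sub_zero]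
    exact ContinuousOn.intervalIntegrable fun s hs =>
      ((hγ s (hsub hs)).fst.continuousAt.sub continuousAt_const).continuousWithinAt
  exact ⟨(hγ t ⟨ht0, htb⟩).fst, hint ▸ (hγ t ⟨ht0, htb⟩).snd.fst⟩

lemma exists_isSolOn_of_ne_zero {x10 x20 : ℝ} (h : x10 ^ 2 + x20 ^ 2 ≠ 0) :
    ∃ b > 0, ∃ z1 z2 : ℝ → ℝ, z1 0 = x10 ∧ z2 0 = x20 ∧ IsSolOn ε ystar kp ki kd z1 z2 b := by
  have hF : ContDiffAt ℝ 1 (pidField ε ystar kp ki kd) (x10, x20, 0) := contDiffAt_pidField h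
  obtain ⟨α, hα0, δ, hδ, hα⟩ :=
    hF.exists_forall_mem_closedBall_exists_eq_forall_mem_Ioo_hasDerivAt₀ 0
  refine ⟨δ, hδ, _, _, by simp [hα0], by simp [hα0],
    isSolOn_of_hasDerivAt_pidField (by simp [hα0]) fun t ht => hα t ⟨?_, ?_⟩⟩ <;>
    linarith [ht.1, ht.2]

lemma pidState_snd_snd {t : ℝ} (ht : 0 ≤ t) :
    (pidState ystar x1 x2 t).2.2 = ∫ s in (0:ℝ)..t, (x1 s - ystar) :=
  integral_congr fun s hs => by
    rw [uIcc_of_le ht] at hs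
    simp only [max_eq_left hs.1]

lemma hasDerivAt_pidState (sol : IsSolOn ε ystar kp ki kd x1 x2 a) {t : ℝ} (ht : t ∈ Ico 0 a) :
    HasDerivAt (pidState ystar x1 x2) (pidField ε ystar kp ki kd (pidState ystar x1 x2 t)) t := by
  have hx1 : ContinuousOn x1 (Ico 0 a) := fun s hs =>
    (sol s hs.1 hs.2).1.continuousAt.continuousWithinAt
  have hfrozen : ContinuousOn (fun s => x1 (max s 0) - ystar) (Iio a) :=
    (hx1.comp (continuous_id.max continuous_const).continuousOn fun s hs =>
      ⟨le_max_right s 0, max_lt hs (ht.1.trans_lt ht.2)⟩).sub continuousOn_const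
  have hJ : HasDerivAt (fun t => ∫ s in (0:ℝ)..t, (x1 (max s 0) - ystar)) (x1 t - ystar) t := by
    have h := integral_hasDerivAt_right
      (hfrozen.mono fun s hs => ((uIcc_of_le ht.1 ▸ hs).2.trans_lt ht.2)).intervalIntegrable
      (hfrozen.stronglyMeasurableAtFilter isOpen_Iio t ht.2)
      (hfrozen.continuousAt (Iio_mem_nhds ht.2))
    rwa [max_eq_left ht.1] at h
  obtain ⟨h1, h2⟩ := sol t ht.1 ht.2
  rw [← pidState_snd_snd ht.1] at h2
  exact h1.prodMk (h2.prodMk hJ)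

lemma pidField_snd_ge (hε : 0 ≤ ε) (hM : 18 * (1 + |kp| + |ki| + |kd|) ≤ M ^ ε) (hM1 : 1 ≤ M)
    {q : ℝ × ℝ × ℝ} (hq : q ∈ pidRegion ystar M) :
    q.2.1 ^ (1 + ε) / 2 ≤ (pidField ε ystar kp ki kd q).2.1 ∧
      9 * q.2.1 ≤ (pidField ε ystar kp ki kd q).2.1 := by
  obtain ⟨hx, he, hJ, hJe, hex⟩ := hq
  have hx0 : 0 < q.2.1 := by linarith
  have hpow : q.2.1 ^ (1 + ε) ≤ (q.1 ^ 2 + q.2.1 ^ 2) ^ ((1 + ε) / 2) := by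
    have hsq : (q.2.1 ^ 2) ^ ((1 + ε) / 2) = q.2.1 ^ (1 + ε) := by
      rw [← rpow_two, ← rpow_mul hx0.le]; ring_nf
    rw [← hsq]
    exact rpow_le_rpow (sq_nonneg _) (le_add_of_nonneg_left (sq_nonneg _)) (by positivity)
  have hsplit : q.2.1 ^ (1 + ε) = q.2.1 * q.2.1 ^ ε := by rw [rpow_add hx0, rpow_one]
  have hxε : M ^ ε ≤ q.2.1 ^ ε := rpow_le_rpow (by linarith) hx hε
  have hp : -(|kp| * (2 * q.2.1)) ≤ kp * (q.1 - ystar) := by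
    nlinarith [neg_abs_le kp, abs_nonneg kp]
  have hi : -(|ki| * (6 * q.2.1)) ≤ ki * q.2.2 := by nlinarith [neg_abs_le ki, abs_nonneg ki]
  have hd : -(|kd| * q.2.1) ≤ kd * q.2.1 := by nlinarith [neg_abs_le kd, abs_nonneg kd]
  have hgain : 9 * (1 + |kp| + |ki| + |kd|) * q.2.1 ≤ q.2.1 ^ (1 + ε) / 2 := by
    rw [hsplit]; nlinarith
  simp only [pidField]
  constructor <;> nlinarith [abs_nonneg kp, abs_nonneg ki, abs_nonneg kd]

lemma exists_pidField_snd_le_mul_sq (hε1 : ε ≤ 1) (hM1 : 1 ≤ M) (L : ℝ) :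
    ∃ C ≥ 0, ∀ q ∈ pidRegion ystar M, q.1 - ystar ≤ L →
      (pidField ε ystar kp ki kd q).2.1 ≤ C * q.2.1 ^ 2 := by
  refine ⟨(|ystar| + |L|) ^ 2 + 1 + 4 * (|kp| + |ki| + |kd|) * |L| + (|kp| + |ki| + |kd|),
    by positivity, fun q hq hqL => ?_⟩
  obtain ⟨hx, he, hJ, hJe, -⟩ := hq
  have hx1 : 1 ≤ q.2.1 := hM1.trans hx
  have hbase : 1 ≤ q.1 ^ 2 + q.2.1 ^ 2 := by nlinarith
  have hpow : (q.1 ^ 2 + q.2.1 ^ 2) ^ ((1 + ε) / 2) ≤ q.1 ^ 2 + q.2.1 ^ 2 := by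
    simpa using rpow_le_rpow_of_exponent_le hbase (show (1 + ε) / 2 ≤ 1 by linarith)
  have hL : q.1 - ystar ≤ |L| := hqL.trans (le_abs_self L)
  have hq1 : q.1 ^ 2 ≤ (|ystar| + |L|) ^ 2 := by
    rw [← sq_abs]
    exact pow_le_pow_left₀ (abs_nonneg _) (abs_le.mpr ⟨by linarith [neg_abs_le ystar],
      by linarith [le_abs_self ystar]⟩) 2
  have hp : kp * (q.1 - ystar) ≤ |kp| * |L| := by nlinarith [le_abs_self kp, abs_nonneg kp]
  have hi : ki * q.2.2 ≤ |ki| * (3 * |L|) := by nlinarith [le_abs_self ki, abs_nonneg ki]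
  have hd : kd * q.2.1 ≤ |kd| * q.2.1 := by nlinarith [le_abs_self kd, abs_nonneg kd]
  have hsq : q.2.1 ≤ q.2.1 ^ 2 := by nlinarith
  have hsq1 : 1 ≤ q.2.1 ^ 2 := by nlinarith
  simp only [pidField]
  nlinarith [mul_le_mul_of_nonneg_left hsq1 (sq_nonneg (|ystar| + |L|)),
    mul_le_mul_of_nonneg_left hsq1 (by positivity : 0 ≤ 4 * (|kp| + |ki| + |kd|) * |L|),
    mul_le_mul_of_nonneg_left hsq (by positivity : 0 ≤ |kp| + |ki| + |kd|),
    mul_nonneg (abs_nonneg kp) (abs_nonneg L), mul_nonneg (abs_nonneg ki) (abs_nonneg L),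
    mul_nonneg (abs_nonneg kd) (abs_nonneg L), mul_nonneg (abs_nonneg kp) (by linarith : 0 ≤ q.2.1),
    mul_nonneg (abs_nonneg ki) (by linarith : 0 ≤ q.2.1)]

lemma eventually_mem_pidRegion (hε : 0 ≤ ε) (hM : 18 * (1 + |kp| + |ki| + |kd|) ≤ M ^ ε)
    (hM1 : 1 ≤ M) {γ : ℝ → ℝ × ℝ × ℝ} {t : ℝ}
    (hγ : HasDerivAt γ (pidField ε ystar kp ki kd (γ t)) t) (ht : γ t ∈ pidRegion ystar M) :
    ∀ᶠ s in 𝓝[>] t, γ s ∈ pidRegion ystar M := by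
  obtain ⟨hF, hF9⟩ := pidField_snd_ge hε hM hM1 ht
  obtain ⟨h1, h2, h3, h4, h5⟩ := ht
  have he := hγ.fst.sub_const ystar
  have hx := hγ.snd.fst
  have hJ := hγ.snd.snd
  simp only [pidField] at he hx hJ hF9
  filter_upwards [(hasDerivAt_const t M).eventually_le_nhdsGT hx h1 (by linarith),
    (hasDerivAt_const t M).eventually_le_nhdsGT he h2 (by linarith),
    (hasDerivAt_const t 0).eventually_le_nhdsGT hJ h3 (by linarith),
    hJ.eventually_le_nhdsGT (he.const_mul 3) h4 (by linarith),
    he.eventually_le_nhdsGT (hx.const_mul 2) h5 (by linarith)] with s h1 h2 h3 h4 h5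
  exact ⟨h1, h2, h3, h4, h5⟩

lemma mapsTo_pidState_pidRegion (hε : 0 ≤ ε) (hM : 18 * (1 + |kp| + |ki| + |kd|) ≤ M ^ ε)
    (hM1 : 1 ≤ M) (sol : IsSolOn ε ystar kp ki kd x1 x2 a) (hx10 : x1 0 = ystar + M)
    (hx20 : x2 0 = M) : MapsTo (pidState ystar x1 x2) (Ico 0 a) (pidRegion ystar M) := by
  intro T hT
  have hγ : ∀ t ∈ Icc 0 T, HasDerivAt (pidState ystar x1 x2)
      (pidField ε ystar kp ki kd (pidState ystar x1 x2 t)) t :=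
    fun t ht => hasDerivAt_pidState sol ⟨ht.1, ht.2.trans_lt hT.2⟩
  have hclosed : IsClosed (pidState ystar x1 x2 ⁻¹' pidRegion ystar M ∩ Icc 0 T) := by
    rw [inter_comm]
    exact ContinuousOn.preimage_isClosed_of_isClosed
      (fun t ht => (hγ t ht).continuousAt.continuousWithinAt) isClosed_Icc isClosed_pidRegion
  have h0 : pidState ystar x1 x2 0 ∈ pidRegion ystar M := by
    simp only [pidRegion, pidState, hx10, hx20, integral_same, mem_ofPred_eq]
    refine ⟨le_rfl, ?_, le_rfl, ?_, ?_⟩ <;> linarith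
  exact hclosed.Icc_subset_of_forall_mem_nhdsWithin h0
    (fun t ht => eventually_mem_pidRegion hε hM hM1 (hγ t (Ico_subset_Icc_self ht.2)) ht.1)
    ⟨hT.1, le_rfl⟩

lemma monotoneOn_pidState (hε : 0 ≤ ε) (hM : 18 * (1 + |kp| + |ki| + |kd|) ≤ M ^ ε)
    (hM1 : 1 ≤ M) (sol : IsSolOn ε ystar kp ki kd x1 x2 a)
    (hR : MapsTo (pidState ystar x1 x2) (Ico 0 a) (pidRegion ystar M)) :
    MonotoneOn (pidState ystar x1 x2) (Ico 0 a) := by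
  have hγ := fun t (ht : t ∈ Ico 0 a) => hasDerivAt_pidState sol ht
  have hM0 : (0:ℝ) ≤ M := by linarith
  refine fun s hs t ht hst => ⟨?_, ?_, ?_⟩
  · exact monotoneOn_of_hasDerivAt_nonneg (convex_Ico 0 a) (fun u hu => (hγ u hu).fst)
      (fun u hu => hM0.trans (hR hu).1) hs ht hst
  · exact monotoneOn_of_hasDerivAt_nonneg (convex_Ico 0 a) (fun u hu => (hγ u hu).snd.fst)
      (fun u hu => by linarith [(pidField_snd_ge hε hM hM1 (hR hu)).2, (hR hu).1]) hs ht hst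
  · exact monotoneOn_of_hasDerivAt_nonneg (convex_Ico 0 a) (fun u hu => (hγ u hu).snd.snd)
      (fun u hu => hM0.trans (hR hu).2.1) hs ht hst

lemma le_of_isSolOn (hε : 0 < ε) (hM : 18 * (1 + |kp| + |ki| + |kd|) ≤ M ^ ε) (hM1 : 1 ≤ M)
    (sol : IsSolOn ε ystar kp ki kd x1 x2 a) (hx10 : x1 0 = ystar + M) (hx20 : x2 0 = M) :
    a ≤ 2 * M ^ (-ε) / ε := by
  by_contra! ha
  have hR := mapsTo_pidState_pidRegion hε.le hM hM1 sol hx10 hx20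
  have h := mul_lt_rpow_neg_of_hasDerivAt hε.le (y := x2) (c := 1 / 2)
    (fun t ht => (hasDerivAt_pidState sol ht).snd.fst)
    (fun t ht => by linarith [show M ≤ x2 t from (hR ht).1]) (fun t ht => by
      have h := (pidField_snd_ge hε.le hM hM1 (hR ht)).1
      change x2 t ^ (1 + ε) / 2 ≤ _ at h
      linarith) _ ⟨by positivity, ha⟩
  rw [hx20] at h
  field_simp at h
  linarith

lemma exists_extension_of_tendsto (ha : 0 < a) (sol : IsSolOn ε ystar kp ki kd x1 x2 a)
    {q₀ : ℝ × ℝ × ℝ} (hq₀ : q₀.1 ^ 2 + q₀.2.1 ^ 2 ≠ 0)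
    (hlim : Tendsto (pidState ystar x1 x2) (𝓝[<] a) (𝓝 q₀)) :
    ∃ b, a < b ∧ ∃ z1 z2 : ℝ → ℝ, z1 0 = x1 0 ∧ z2 0 = x2 0 ∧
      IsSolOn ε ystar kp ki kd z1 z2 b ∧ ∀ t, 0 ≤ t → t < a → z1 t = x1 t ∧ z2 t = x2 t := by
  have hF : ContDiffAt ℝ 1 (pidField ε ystar kp ki kd) q₀ := contDiffAt_pidField hq₀
  obtain ⟨α, hαa, δ, hδ, hα⟩ :=
    hF.exists_forall_mem_closedBall_exists_eq_forall_mem_Ioo_hasDerivAt₀ a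
  set Γ : ℝ → ℝ × ℝ × ℝ := fun t => if t < a then pidState ystar x1 x2 t else α t with hΓ
  have hΓ' : ∀ t ∈ Ico 0 (a + δ), HasDerivAt Γ (pidField ε ystar kp ki kd (Γ t)) t := by
    rintro t ⟨ht0, htb⟩
    rcases lt_trichotomy t a with hta | rfl | hta
    · have hΓt : Γ =ᶠ[𝓝 t] pidState ystar x1 x2 := by
        filter_upwards [Iio_mem_nhds hta] with s hs using if_pos hs
      rw [hΓt.eq_of_nhds]
      exact (hasDerivAt_pidState sol ⟨ht0, hta⟩).congr_of_eventuallyEq hΓt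
    · rw [show Γ t = q₀ from (if_neg (lt_irrefl t)).trans hαa]
      refine hasDerivAt_ite_of_tendsto ?_ (hF.continuousAt.tendsto.comp hlim) (hαa ▸ hlim) ?_
      · filter_upwards [Ioo_mem_nhdsLT ha] with s hs using hasDerivAt_pidState sol ⟨hs.1.le, hs.2⟩
      · have h := hα t ⟨by linarith, by linarith⟩
        rw [hαa] at h
        exact h.hasDerivWithinAt
    · have hΓt : Γ =ᶠ[𝓝 t] α := by
        filter_upwards [Ioi_mem_nhds hta] with s hs using if_neg (not_lt.mpr hs.le)
      rw [hΓt.eq_of_nhds]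
      exact (hα t ⟨by linarith, htb⟩).congr_of_eventuallyEq hΓt
  have hΓ0 : Γ 0 = pidState ystar x1 x2 0 := if_pos ha
  refine ⟨a + δ, by linarith, fun t => (Γ t).1, fun t => (Γ t).2.1, by simp [hΓ0, pidState],
    by simp [hΓ0, pidState], isSolOn_of_hasDerivAt_pidField (by simp [hΓ0, pidState]) hΓ',
    fun t _ hta => by simp [hΓ, hta, pidState]⟩

lemma exists_extension_of_bddAbove (hε0 : 0 ≤ ε) (hε1 : ε ≤ 1)
    (hM : 18 * (1 + |kp| + |ki| + |kd|) ≤ M ^ ε) (hM1 : 1 ≤ M) (ha : 0 < a)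
    (sol : IsSolOn ε ystar kp ki kd x1 x2 a)
    (hR : MapsTo (pidState ystar x1 x2) (Ico 0 a) (pidRegion ystar M))
    (hbdd : BddAbove ((fun t => x1 t - ystar) '' Ico 0 a)) :
    ∃ b, a < b ∧ ∃ z1 z2 : ℝ → ℝ, z1 0 = x1 0 ∧ z2 0 = x2 0 ∧
      IsSolOn ε ystar kp ki kd z1 z2 b ∧ ∀ t, 0 ≤ t → t < a → z1 t = x1 t ∧ z2 t = x2 t := by
  obtain ⟨L, hL⟩ := hbdd
  have he : ∀ t ∈ Ico 0 a, x1 t - ystar ≤ L := fun t ht => hL (mem_image_of_mem _ ht)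
  obtain ⟨C, hC0, hC⟩ := exists_pidField_snd_le_mul_sq (ystar := ystar) (kp := kp) (ki := ki)
    (kd := kd) hε1 hM1 L
  have hx2 := le_mul_exp_of_hasDerivAt (y := x2) (fun t ht => (sol t ht.1 ht.2).1)
    (fun t ht => (hasDerivAt_pidState sol ht).snd.fst)
    (fun t ht => by linarith [show M ≤ x2 t from (hR ht).1])
    (fun t ht => hC _ (hR ht) (he t ht))
  have hstate : BddAbove (pidState ystar x1 x2 '' Ico 0 a) := by
    refine ⟨(ystar + L, x2 0 * exp (C * (ystar + L - x1 0)), 3 * L), ?_⟩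
    rintro _ ⟨t, ht, rfl⟩
    have hx2t := hx2 t ht
    have hx20 : 0 < x2 0 := by linarith [show M ≤ x2 0 from (hR ⟨le_rfl, ha⟩).1]
    have hJ : (pidState ystar x1 x2 t).2.2 ≤ 3 * (x1 t - ystar) := (hR ht).2.2.2.1
    refine ⟨show x1 t ≤ ystar + L by linarith [he t ht], show x2 t ≤ _ from hx2t.trans ?_,
      by linarith [he t ht]⟩
    exact mul_le_mul_of_nonneg_left (exp_le_exp.mpr (mul_le_mul_of_nonneg_left
      (by linarith [he t ht]) hC0)) hx20.le
  obtain ⟨q₀, hq₀⟩ := exists_tendsto_nhdsLT_of_monotoneOn ha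
    (monotoneOn_pidState hε0 hM hM1 sol hR) hstate
  have hq₀R : q₀ ∈ pidRegion ystar M := isClosed_pidRegion.mem_of_tendsto hq₀
    (by filter_upwards [Ioo_mem_nhdsLT ha] with t ht using hR ⟨ht.1.le, ht.2⟩)
  exact exists_extension_of_tendsto ha sol
    (add_pos_of_nonneg_of_pos (sq_nonneg _) (pow_pos (by linarith [hq₀R.1]) 2)).ne' hq₀

end PID

theorem pid_finite_escape_time
    (ε ystar kp ki kd : ℝ) (hε0 : 0 < ε) (hε1 : ε ≤ 1) :
    ∃ x10 x20 : ℝ,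
      -- no solution with this initial value extends to all of [0, ∞):
      -- the maximal interval of existence [0, a) is finite
      (¬ ∃ x1 x2 : ℝ → ℝ, x1 0 = x10 ∧ x2 0 = x20 ∧
        ∀ t : ℝ, 0 ≤ t →
          HasDerivAt x1 (x2 t) t ∧
          HasDerivAt x2 (((x1 t) ^ 2 + (x2 t) ^ 2) ^ ((1 + ε) / 2)
            + kp * (x1 t - ystar) + ki * (∫ s in (0:ℝ)..t, (x1 s - ystar))
            + kd * x2 t) t) ∧
      -- every maximal (non-extendable) solution on a finite interval [0, a)
      -- has error blowing up: e(t) → ∞ as t → a⁻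
      (∀ a : ℝ, ∀ x1 x2 : ℝ → ℝ, x1 0 = x10 → x2 0 = x20 →
        IsSolOn ε ystar kp ki kd x1 x2 a →
        (¬ ∃ b : ℝ, a < b ∧ ∃ z1 z2 : ℝ → ℝ,
          z1 0 = x10 ∧ z2 0 = x20 ∧ IsSolOn ε ystar kp ki kd z1 z2 b ∧
          (∀ t, 0 ≤ t → t < a → z1 t = x1 t ∧ z2 t = x2 t)) →
        Tendsto (fun t => x1 t - ystar) (nhdsWithin a (Set.Iio a)) atTop) := by
  obtain ⟨M, hM1, hM⟩ : ∃ M : ℝ, 1 ≤ M ∧ 18 * (1 + |kp| + |ki| + |kd|) ≤ M ^ ε :=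
    ⟨_, one_le_rpow (by linarith [abs_nonneg kp, abs_nonneg ki, abs_nonneg kd])
      (inv_nonneg.mpr hε0.le), (rpow_inv_rpow (by positivity) hε0.ne').ge⟩
  refine ⟨ystar + M, M, fun ⟨x1, x2, h1, h2, hsol⟩ => ?_, fun a x1 x2 h1 h2 sol hmax => ?_⟩
  · have := le_of_isSolOn hε0 hM hM1 (a := 2 * M ^ (-ε) / ε + 1) (fun t ht _ => hsol t ht) h1 h2
    linarith
  rcases le_or_gt a 0 with ha | ha
  · obtain ⟨b, hb, z1, z2, hz1, hz2, hz⟩ := exists_isSolOn_of_ne_zero (ε := ε) (ystar := ystar)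
      (kp := kp) (ki := ki) (kd := kd) (x10 := ystar + M) (x20 := M) (by positivity)
    exact (hmax ⟨b, by linarith, z1, z2, hz1, hz2, hz, fun t ht0 hta => by linarith⟩).elim
  have hR := mapsTo_pidState_pidRegion hε0.le hM hM1 sol h1 h2
  have he : MonotoneOn (fun t => x1 t - ystar) (Ico 0 a) := fun s hs t ht hst =>
    sub_le_sub_right (monotoneOn_pidState hε0.le hM hM1 sol hR hs ht hst).1 ystar
  refine he.tendsto_nhdsLT_atTop fun hbdd => hmax ?_
  rw [← h1, ← h2]
  exact exists_extension_of_bddAbove hε0.le hε1 hM hM1 ha sol hR hbdd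
end

section
/- Fix ε > 0, y* ∈ ℝ, and k_p, k_i, k_d ∈ ℝ. There exists L₀ > 1 such that for every L ≥ L₀ the cone C_L is positively invariant for the system y₀' = y₁, y₁' = y₂, y₂' = ((y₁ + y*)² + y₂²)^{(1+ε)/2} + k_i·y₀ + k_p·y₁ + k_d·y₂: if y = (y₀, y₁, y₂) : [0,T) → ℝ³ is a solution of this system with y(0) ∈ C_L, then y(t) ∈ C_L for all t ∈ [0,T). -/
open Real MeasureTheory Filter Topology Set

/-- The cone `C_L = {(y₀, y₁, y₂) : y₂ − 1 ≥ y₁ ≥ y₀ + L ≥ L}`. -/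
def coneC (L : ℝ) : Set (ℝ × ℝ × ℝ) :=
  {p | p.2.1 ≤ p.2.2 - 1 ∧ p.1 + L ≤ p.2.1 ∧ L ≤ p.1 + L}

private lemma right_pos {g : ℝ → ℝ} {d t : ℝ} (hg : HasDerivAt g d t)
    (h0 : g t = 0) (hd : 0 < d) : ∀ᶠ s in 𝓝[>] t, 0 < g s := by
  have hs : Tendsto (slope g t) (𝓝[≠] t) (𝓝 d) := hasDerivAt_iff_tendsto_slope.mp hg
  have hev : ∀ᶠ s in 𝓝[≠] t, 0 < slope g t s := hs.eventually (eventually_gt_nhds hd)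
  have hev' : ∀ᶠ s in 𝓝[>] t, 0 < slope g t s :=
    hev.filter_mono (nhdsWithin_mono t fun s hs => ne_of_gt hs)
  filter_upwards [hev', self_mem_nhdsWithin] with s hsl hst
  have hst' : (0:ℝ) < s - t := sub_pos.mpr hst
  have h2 := mul_pos hsl hst'
  rw [slope_def_field, div_mul_cancel₀ _ (ne_of_gt hst')] at h2
  linarith

private lemma eventually_nonneg_right {g : ℝ → ℝ} {d t : ℝ} (hg : HasDerivAt g d t)
    (h0 : 0 ≤ g t) (hd : g t = 0 → 0 < d) : ∀ᶠ s in 𝓝[>] t, 0 ≤ g s := by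
  rcases eq_or_lt_of_le h0 with h | h
  · exact (right_pos hg h.symm (hd h.symm)).mono fun s hs => hs.le
  · have hev : ∀ᶠ s in 𝓝 t, 0 < g s :=
      hg.continuousAt.eventually (eventually_gt_nhds h)
    exact ((hev.filter_mono nhdsWithin_le_nhds).mono fun s hs => hs.le)

theorem cone_positively_invariant
    (ε ystar kp ki kd : ℝ) (hε : 0 < ε) :
    ∃ L0 : ℝ, 1 < L0 ∧ ∀ L : ℝ, L0 ≤ L →
      ∀ T : ℝ, ∀ y0 y1 y2 : ℝ → ℝ,
        (y0 0, y1 0, y2 0) ∈ coneC L →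
        (∀ t, 0 ≤ t → t < T →
          HasDerivAt y0 (y1 t) t ∧
          HasDerivAt y1 (y2 t) t ∧
          HasDerivAt y2 (((y1 t + ystar) ^ 2 + (y2 t) ^ 2) ^ ((1 + ε) / 2)
            + ki * y0 t + kp * y1 t + kd * y2 t) t) →
        ∀ t, 0 ≤ t → t < T → (y0 t, y1 t, y2 t) ∈ coneC L := by
  set C : ℝ := |ki| + |kp| + |kd - 1| with hCdef
  have hC0 : 0 ≤ C := by positivity
  refine ⟨max 2 ((C + 1) ^ (1/ε)), lt_of_lt_of_le one_lt_two (le_max_left _ _), ?_⟩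
  intro L hL T y0 y1 y2 hinit hode t ht0 htT
  have hL2 : (2:ℝ) ≤ L := le_trans (le_max_left _ _) hL
  have hLpos : (0:ℝ) < L := by linarith
  have hLε : C + 1 ≤ L ^ ε := by
    have h1 : (C + 1) ^ (1/ε) ≤ L := le_trans (le_max_right _ _) hL
    have h2 : ((C + 1) ^ (1/ε)) ^ ε ≤ L ^ ε :=
      Real.rpow_le_rpow (by positivity) h1 hε.le
    rwa [one_div, ← Real.rpow_mul (by positivity : (0:ℝ) ≤ C + 1),
      inv_mul_cancel₀ hε.ne', Real.rpow_one] at h2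
  by_contra hbad
  set B : Set ℝ := {s | 0 ≤ s ∧ s < T ∧ (y0 s, y1 s, y2 s) ∉ coneC L} with hBdef
  have hBne : B.Nonempty := ⟨t, ht0, htT, hbad⟩
  have hBbd : BddBelow B := ⟨0, fun s hs => hs.1⟩
  set τ := sInf B with hτdef
  have hτ0 : 0 ≤ τ := le_csInf hBne fun s hs => hs.1
  have hτt : τ ≤ t := csInf_le hBbd ⟨ht0, htT, hbad⟩
  have hτT : τ < T := lt_of_le_of_lt hτt htT
  have hgood : ∀ s, 0 ≤ s → s < τ → (y0 s, y1 s, y2 s) ∈ coneC L := by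
    intro s hs0 hsτ
    by_contra h
    exact absurd (csInf_le hBbd ⟨hs0, lt_trans hsτ hτT, h⟩) (not_le.mpr hsτ)
  obtain ⟨h0', h1', h2'⟩ := hode τ hτ0 hτT
  -- the cone is closed
  have hclosed : IsClosed (coneC L) := by
    unfold coneC
    simp only [Set.setOf_and]
    exact (isClosed_le (by fun_prop) (by fun_prop)).inter
      ((isClosed_le (by fun_prop) (by fun_prop)).inter
        (isClosed_le (by fun_prop) (by fun_prop)))
  -- at time τ we are still in the cone
  have hτcone : (y0 τ, y1 τ, y2 τ) ∈ coneC L := by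
    rcases hτ0.eq_or_lt with h | h
    · rw [← h]; exact hinit
    · have htend : Tendsto (fun s => (y0 s, y1 s, y2 s)) (𝓝[<] τ)
          (𝓝 (y0 τ, y1 τ, y2 τ)) :=
        ((h0'.continuousAt.tendsto.mono_left nhdsWithin_le_nhds).prodMk_nhds
          ((h1'.continuousAt.tendsto.mono_left nhdsWithin_le_nhds).prodMk_nhds
            (h2'.continuousAt.tendsto.mono_left nhdsWithin_le_nhds)))
      have hev : ∀ᶠ s in 𝓝[<] τ, (y0 s, y1 s, y2 s) ∈ coneC L := by
        filter_upwards [Ioo_mem_nhdsLT_of_mem (⟨h, le_refl τ⟩ : τ ∈ Set.Ioc 0 τ)]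
          with s hs
        exact hgood s hs.1.le hs.2
      exact hclosed.mem_of_tendsto htend hev
  obtain ⟨hbc, hab, ha⟩ := id hτcone
  simp only at hbc hab ha
  have ha0 : 0 ≤ y0 τ := by linarith
  have hbL : L ≤ y1 τ := by linarith
  have hcpos : 0 < y2 τ := by linarith
  -- eventually in the cone to the right of τ
  have e3 : ∀ᶠ s in 𝓝[>] τ, 0 ≤ y0 s :=
    eventually_nonneg_right h0' ha0 (fun _ => by linarith)
  have e2 : ∀ᶠ s in 𝓝[>] τ, 0 ≤ y1 s - y0 s - L := by
    refine eventually_nonneg_right ((h1'.sub h0').sub_const L) (by simp; linarith)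
      (fun _ => by linarith)
  have e1 : ∀ᶠ s in 𝓝[>] τ, 0 ≤ y2 s - y1 s - 1 := by
    refine eventually_nonneg_right ((h2'.sub h1').sub_const 1) (by simp; linarith) ?_
    intro hz
    have hc1 : y2 τ = y1 τ + 1 := by linarith
    -- the key estimate
    set a := y0 τ
    set b := y1 τ
    set c := y2 τ
    have hac : a ≤ c := by linarith
    have hbc' : b ≤ c := by linarith
    have hLc : L ≤ c := by linarith
    have hR1 : (c ^ 2 : ℝ) ^ ((1 + ε) / 2) ≤ ((b + ystar) ^ 2 + c ^ 2) ^ ((1 + ε) / 2) :=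
      Real.rpow_le_rpow (sq_nonneg c) (by nlinarith [sq_nonneg (b + ystar)])
        (by positivity)
    have hR2 : (c ^ 2 : ℝ) ^ ((1 + ε) / 2) = c * c ^ ε := by
      rw [← Real.rpow_natCast c 2, ← Real.rpow_mul hcpos.le]
      rw [show ((2:ℕ):ℝ) * ((1 + ε) / 2) = 1 + ε by push_cast; ring]
      rw [Real.rpow_add hcpos, Real.rpow_one]
    have hR3 : c * (C + 1) ≤ c * c ^ ε := by
      have : L ^ ε ≤ c ^ ε := Real.rpow_le_rpow hLpos.le hLc hε.le
      have := le_trans hLε this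
      exact mul_le_mul_of_nonneg_left this hcpos.le
    have hki : -(|ki| * c) ≤ ki * a := by
      have h1 : -|ki| * a ≤ ki * a := mul_le_mul_of_nonneg_right (neg_abs_le ki) ha0
      have h2 : |ki| * a ≤ |ki| * c := mul_le_mul_of_nonneg_left hac (abs_nonneg ki)
      linarith
    have hkp : -(|kp| * c) ≤ kp * b := by
      have hb0 : 0 ≤ b := by linarith
      have h1 : -|kp| * b ≤ kp * b := mul_le_mul_of_nonneg_right (neg_abs_le kp) hb0
      have h2 : |kp| * b ≤ |kp| * c := mul_le_mul_of_nonneg_left hbc' (abs_nonneg kp)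
      linarith
    have hkd : -|kd - 1| * c ≤ (kd - 1) * c :=
      mul_le_mul_of_nonneg_right (neg_abs_le (kd - 1)) hcpos.le
    have hsum : c * (C + 1) = |ki| * c + |kp| * c + |kd - 1| * c + c := by
      rw [hCdef]; ring
    have : 0 < ((b + ystar) ^ 2 + c ^ 2) ^ ((1 + ε) / 2)
        + ki * a + kp * b + kd * c - c := by nlinarith
    linarith [this]
  have key : ∀ᶠ s in 𝓝[>] τ, (y0 s, y1 s, y2 s) ∈ coneC L := by
    filter_upwards [e1, e2, e3] with s h1 h2 h3
    exact ⟨by dsimp; linarith, by dsimp; linarith, by dsimp; linarith⟩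
  obtain ⟨u, hu, huo⟩ := mem_nhdsGT_iff_exists_Ioo_subset.mp key
  obtain ⟨s, hsB, hsu⟩ := (csInf_lt_iff hBbd hBne).mp (show sInf B < u from hu)
  have hsτ : τ ≤ s := csInf_le hBbd hsB
  have hne : s ≠ τ := fun h => hsB.2.2 (h ▸ hτcone)
  exact hsB.2.2 (huo ⟨lt_of_le_of_ne hsτ (Ne.symm hne), hsu⟩)
end

section
/- Fix ε > 0, y* ∈ ℝ, and k_p, k_i, k_d ∈ ℝ. There exists L₀ > 1 such that for every L ≥ L₀ and every (y₀, y₁, y₂) ∈ C_L, the following two inequalities hold: ((y₁ + y*)² + y₂²)^{(1+ε)/2} + k_i·y₀ + k_p·y₁ + k_d·y₂ ≥ y₂ + y₂^{1+ε}/2, and ((y₁ + y*)² + y₂²)^{(1+ε)/2} + k_i·y₀ + k_p·y₁ + k_d·y₂ ≤ (3·y₂²)^{(1+ε)/2}. -/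
open Real

set_option maxHeartbeats 1600000 in
theorem cone_vector_field_bounds
    (ε ystar kp ki kd : ℝ) (hε : 0 < ε) :
    ∃ L0 : ℝ, 1 < L0 ∧ ∀ L : ℝ, L0 ≤ L →
      ∀ y0 y1 y2 : ℝ, (y0, y1, y2) ∈ coneC L →
        (y2 + y2 ^ (1 + ε) / 2 ≤
          ((y1 + ystar) ^ 2 + y2 ^ 2) ^ ((1 + ε) / 2) + ki * y0 + kp * y1 + kd * y2) ∧
        (((y1 + ystar) ^ 2 + y2 ^ 2) ^ ((1 + ε) / 2) + ki * y0 + kp * y1 + kd * y2 ≤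
          (3 * y2 ^ 2) ^ ((1 + ε) / 2)) := by
  obtain ⟨C, hCdef⟩ : ∃ C : ℝ, C = |ki| + |kp| + |kd| := ⟨_, rfl⟩
  obtain ⟨M, hMdef⟩ : ∃ M : ℝ, M = 20 * (C + 1) := ⟨_, rfl⟩
  have hCnn : 0 ≤ C := by rw [hCdef]; positivity
  have hMpos : 0 < M := by rw [hMdef]; linarith
  have hMr : 0 ≤ M ^ (1/ε) := Real.rpow_nonneg hMpos.le _
  refine ⟨max 2 (M ^ (1/ε) + 5 * |ystar| + 1), by simp, ?_⟩
  intro L hL y0 y1 y2 hmem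
  obtain ⟨h1, h2, h3⟩ := hmem
  simp only at h1 h2 h3
  have hL2 : 2 ≤ L := le_trans (le_max_left _ _) hL
  have hLbig : M ^ (1/ε) + 5 * |ystar| + 1 ≤ L := le_trans (le_max_right _ _) hL
  have hy0 : 0 ≤ y0 := by linarith
  have hy1L : L ≤ y1 := by linarith
  have hy12 : y1 + 1 ≤ y2 := by linarith
  have hy01 : y0 ≤ y1 := by linarith
  have hy2pos : 0 < y2 := by nlinarith [abs_nonneg ystar]
  have hy02 : y0 ≤ y2 := by linarith
  have hy122 : y1 ≤ y2 := by linarith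
  have hy1nn : 0 ≤ y1 := by nlinarith [abs_nonneg ystar]
  have hMle : M ^ (1/ε) ≤ y2 := by nlinarith [abs_nonneg ystar]
  have hst : 5 * |ystar| ≤ y2 := by linarith
  -- y2 ^ ε ≥ M
  have hyeps : M ≤ y2 ^ ε := by
    have h := Real.rpow_le_rpow hMr hMle hε.le
    rwa [← Real.rpow_mul hMpos.le, one_div_mul_cancel hε.ne', Real.rpow_one] at h
  -- linear term bounds
  have hki1 : ki * y0 ≤ |ki| * y2 :=
    le_trans (mul_le_mul_of_nonneg_right (le_abs_self ki) hy0)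
      (mul_le_mul_of_nonneg_left hy02 (abs_nonneg ki))
  have hki2 : -(|ki| * y2) ≤ ki * y0 := by
    have := mul_le_mul_of_nonneg_right (neg_abs_le ki) hy0
    have := mul_le_mul_of_nonneg_left hy02 (abs_nonneg ki)
    nlinarith
  have hkp1 : kp * y1 ≤ |kp| * y2 :=
    le_trans (mul_le_mul_of_nonneg_right (le_abs_self kp) hy1nn)
      (mul_le_mul_of_nonneg_left hy122 (abs_nonneg kp))
  have hkp2 : -(|kp| * y2) ≤ kp * y1 := by
    have := mul_le_mul_of_nonneg_right (neg_abs_le kp) hy1nn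
    have := mul_le_mul_of_nonneg_left hy122 (abs_nonneg kp)
    nlinarith
  have hkd1 : kd * y2 ≤ |kd| * y2 := mul_le_mul_of_nonneg_right (le_abs_self kd) hy2pos.le
  have hkd2 : -(|kd| * y2) ≤ kd * y2 := by
    have := mul_le_mul_of_nonneg_right (neg_abs_le kd) hy2pos.le
    linarith
  have hlin_up : ki * y0 + kp * y1 + kd * y2 ≤ C * y2 := by
    rw [hCdef]; ring_nf; linarith
  have hlin_lo : -(C * y2) ≤ ki * y0 + kp * y1 + kd * y2 := by
    rw [hCdef]; ring_nf; linarith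
  -- (y2^2) ^ ((1+ε)/2) = y2 ^ (1+ε)
  have hsq : ((y2 : ℝ) ^ 2) ^ ((1 + ε) / 2) = y2 ^ (1 + ε) := by
    rw [← Real.rpow_natCast y2 2, ← Real.rpow_mul hy2pos.le]
    congr 1
    push_cast
    ring
  have hsplit : y2 ^ (1 + ε) = y2 * y2 ^ ε := by
    rw [Real.rpow_add hy2pos, Real.rpow_one]
  have hpnn : (0:ℝ) ≤ (1 + ε) / 2 := by linarith
  -- lower bound on f
  have flower : y2 ^ (1 + ε) ≤ ((y1 + ystar) ^ 2 + y2 ^ 2) ^ ((1 + ε) / 2) := by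
    rw [← hsq]
    exact Real.rpow_le_rpow (sq_nonneg _) (by linarith [sq_nonneg (y1 + ystar)]) hpnn
  -- upper bound on f
  have habs : |ystar| ≤ y2 / 5 := by linarith
  have habs' := abs_le.mp habs
  have hs : (y1 + ystar) ^ 2 ≤ 3/2 * y2 ^ 2 := by
    have hprod := mul_nonneg (show (0:ℝ) ≤ 6/5 * y2 - y1 - ystar by linarith)
      (show (0:ℝ) ≤ 6/5 * y2 + y1 + ystar by linarith)
    linarith [hprod, sq_nonneg y2]
  have hfu : ((y1 + ystar) ^ 2 + y2 ^ 2) ^ ((1 + ε) / 2) ≤ (5/2 * y2 ^ 2) ^ ((1 + ε) / 2) :=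
    Real.rpow_le_rpow (by positivity) (by linarith) hpnn
  have hmul52 : ((5:ℝ)/2 * y2 ^ 2) ^ ((1 + ε) / 2) = (5/2:ℝ) ^ ((1 + ε) / 2) * y2 ^ (1 + ε) := by
    rw [Real.mul_rpow (by norm_num) (sq_nonneg _), hsq]
  have hmul3 : ((3:ℝ) * y2 ^ 2) ^ ((1 + ε) / 2) = (3:ℝ) ^ ((1 + ε) / 2) * y2 ^ (1 + ε) := by
    rw [Real.mul_rpow (by norm_num) (sq_nonneg _), hsq]
  -- gap between 3^p and (5/2)^p
  have hp12 : (1:ℝ)/2 ≤ (1 + ε) / 2 := by linarith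
  have h65 : ((6:ℝ)/5) ^ ((1:ℝ)/2) ≤ ((6:ℝ)/5) ^ ((1 + ε)/2) :=
    Real.rpow_le_rpow_of_exponent_le (by norm_num) hp12
  have h65v : (12:ℝ)/11 ≤ ((6:ℝ)/5) ^ ((1:ℝ)/2) := by
    rw [← Real.sqrt_eq_rpow]
    rw [show (12:ℝ)/11 = Real.sqrt ((12/11)^2) by rw [Real.sqrt_sq (by norm_num)]]
    exact Real.sqrt_le_sqrt (by norm_num)
  have hone : (1:ℝ) ≤ (5/2:ℝ) ^ ((1 + ε)/2) :=
    Real.one_le_rpow (by norm_num) (by linarith)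
  have h3eq : (3:ℝ) ^ ((1 + ε)/2) = (5/2:ℝ) ^ ((1 + ε)/2) * ((6:ℝ)/5) ^ ((1 + ε)/2) := by
    rw [← Real.mul_rpow (by norm_num) (by norm_num)]
    norm_num
  have hd : (5/2:ℝ) ^ ((1 + ε)/2) + 1/11 ≤ (3:ℝ) ^ ((1 + ε)/2) := by
    rw [h3eq]
    have := mul_le_mul_of_nonneg_left (h65v.trans h65) (le_trans zero_le_one hone)
    linarith [this, hone]
  have hynn : 0 ≤ y2 ^ (1 + ε) := Real.rpow_nonneg hy2pos.le _
  rw [hMdef] at hyeps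
  have hmm := mul_le_mul_of_nonneg_left hyeps hy2pos.le
  have pos1 : 0 ≤ C * y2 := mul_nonneg hCnn hy2pos.le
  constructor
  · -- lower inequality
    have key : y2 + C * y2 ≤ y2 ^ (1 + ε) / 2 := by
      rw [hsplit]
      linarith [hmm, pos1]
    linarith [flower, hlin_lo, key]
  · -- upper inequality
    rw [hmul3]
    have s1 : ((y1 + ystar) ^ 2 + y2 ^ 2) ^ ((1 + ε) / 2) ≤
        (5/2:ℝ) ^ ((1 + ε)/2) * y2 ^ (1 + ε) := by rw [← hmul52]; exact hfu
    have s2 := mul_le_mul_of_nonneg_right hd hynn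
    have s3 : C * y2 ≤ 1/11 * y2 ^ (1 + ε) := by
      rw [hsplit]
      linarith [hmm, pos1]
    linarith [s1, s2, s3, hlin_up]
end

section
/- For any L > 0, any k_p, k_i, k_d ∈ ℝ, and any y* ∈ ℝ, there exist an L-Lipschitz function f : ℝ³ → ℝ and differentiable functions x₁, x₂, x₃ : [0,∞) → ℝ satisfying x₁'(t) = x₂(t), x₂'(t) = x₃(t), x₃'(t) = f(x₁(t), x₂(t), x₃(t)) + k_p·e(t) + k_i·∫₀ᵗ e(s)ds + k_d·e'(t) for all t ≥ 0 (where e(t) = x₁(t) − y*), such that sup_{t ≥ 0} |e(t)| = ∞. -/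
open Real MeasureTheory intervalIntegral

/-!
Take `f x = L * x₃ + c`. The closed loop is then linear, with characteristic polynomial
`s⁴ - L s³ - k_d s² - k_p s - k_i`, whose roots sum to `L > 0`; so some root `z` has
`0 < Re z`, and `e(t) = Re (exp (z t))` is an unbounded solution. The constant
`c = Re (k_i / z)` absorbs the constant term of `∫₀ᵗ e = Re ((exp (z t) - 1) / z)`.
-/

open Polynomial

theorem Polynomial.exists_mem_roots_re_pos {p : ℂ[X]} (hp : p.Monic) (h : p.nextCoeff.re < 0) :
    ∃ z ∈ p.roots, 0 < z.re := by
  have hsum : (p.roots.map Complex.re).sum = -p.nextCoeff.re := by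
    rw [(IsAlgClosed.splits p).nextCoeff_eq_neg_sum_roots_of_monic hp, Complex.neg_re, neg_neg]
    exact (map_multiset_sum Complex.reAddGroupHom p.roots).symm
  by_contra! hle
  have := Multiset.sum_map_le_sum_map Complex.re (fun _ => (0 : ℝ)) hle
  simp only [Multiset.map_const', Multiset.sum_replicate, smul_zero] at this
  linarith

theorem exists_re_pos_root_quartic (a b c d : ℝ) (ha : 0 < a) :
    ∃ z : ℂ, 0 < z.re ∧ z ^ 4 = a * z ^ 3 + b * z ^ 2 + c * z + d := by
  set p : ℂ[X] := X ^ 4 - (C (a : ℂ) * X ^ 3 + C (b : ℂ) * X ^ 2 + C (c : ℂ) * X + C (d : ℂ))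
  have hdeg : p.natDegree = 4 := by simp only [p]; compute_degree!
  have hmonic : p.Monic := by simp only [p]; monicity!
  have hnext : p.nextCoeff = -(a : ℂ) := by
    rw [nextCoeff_of_natDegree_pos (by rw [hdeg]; norm_num), hdeg]
    simp [p, coeff_X_pow]
  obtain ⟨z, hz, hre⟩ := p.exists_mem_roots_re_pos hmonic (by simp [hnext, ha])
  have hroot := (mem_roots hmonic.ne_zero).mp hz
  simp [p] at hroot
  exact ⟨z, hre, by linear_combination hroot⟩

open Complex in
theorem hasDerivAt_re_mul_cexp_mul (w z : ℂ) (t : ℝ) :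
    HasDerivAt (fun t : ℝ => (w * cexp (z * t)).re) (w * z * cexp (z * t)).re t := by
  have h : HasDerivAt (fun s : ℝ => w * cexp (z * s)) (w * z * cexp (z * t)) t := by
    simpa [mul_comm, mul_left_comm, mul_assoc] using
      ((hasDerivAt_id (t : ℂ)).const_mul z).cexp.comp_ofReal.const_mul w
  exact reCLM.hasFDerivAt.comp_hasDerivAt t h

open Complex in
theorem integral_re_cexp_mul {z : ℂ} (hz : z ≠ 0) (t : ℝ) :
    ∫ s in (0 : ℝ)..t, (cexp (z * s)).re = ((cexp (z * t) - 1) / z).re := by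
  have hcont : Continuous fun s : ℝ => cexp (z * s) := by fun_prop
  simpa [integral_exp_mul_complex hz] using
    intervalIntegral_re (hcont.intervalIntegrable (μ := volume) 0 t)

theorem exists_pos_forall_cos_mul_nat_mul_eq_one (b : ℝ) :
    ∃ p > 0, ∀ n : ℕ, cos (b * (n * p)) = 1 := by
  rcases eq_or_ne b 0 with rfl | hb
  · exact ⟨1, one_pos, fun n => by simp⟩
  · refine ⟨2 * π / |b|, by positivity, fun n => ?_⟩
    have h : |b * (n * (2 * π / |b|))| = n * (2 * π) := by
      rw [abs_mul, abs_of_nonneg (by positivity : (0 : ℝ) ≤ n * (2 * π / |b|))]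
      field_simp
    rw [← cos_abs, h, cos_nat_mul_two_pi]

open Complex in
theorem exists_lt_abs_re_cexp_mul {z : ℂ} (hz : 0 < z.re) (M : ℝ) :
    ∃ t : ℝ, 0 ≤ t ∧ M < |(cexp (z * t)).re| := by
  obtain ⟨p, hp, hcos⟩ := exists_pos_forall_cos_mul_nat_mul_eq_one z.im
  obtain ⟨n, hn⟩ := exists_nat_gt (M / (z.re * p))
  refine ⟨n * p, by positivity, ?_⟩
  have hre : (cexp (z * (n * p : ℝ))).re = Real.exp (z.re * (n * p)) := by
    simp [exp_re, hcos]
  rw [hre, abs_of_pos (Real.exp_pos _)]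
  calc M < z.re * (n * p) := by
        rw [div_lt_iff₀ (by positivity)] at hn; linarith
    _ ≤ Real.exp (z.re * (n * p)) := by linarith [add_one_le_exp (z.re * (n * p))]

theorem re_pow_three_mul_eq_of_quartic {z : ℂ} (hz : z ≠ 0) {a b c d : ℝ}
    (h : z ^ 4 = a * z ^ 3 + b * z ^ 2 + c * z + d) (u : ℂ) :
    (z ^ 3 * u).re = a * (z ^ 2 * u).re + (d / z).re + c * u.re + d * ((u - 1) / z).re
      + b * (z * u).re := by
  have key : z ^ 3 * u = a * (z ^ 2 * u) + d / z + c * u + d * ((u - 1) / z) + b * (z * u) := by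
    field_simp
    linear_combination u * h
  simpa only [Complex.add_re, Complex.re_ofReal_mul] using congrArg Complex.re key

open Complex in
theorem pid_fails_third_order
    (L : ℝ) (hL : 0 < L) (kp ki kd ystar : ℝ) :
    ∃ f : ℝ × ℝ × ℝ → ℝ,
      (∀ x y : ℝ × ℝ × ℝ, |f x - f y| ≤
        L * Real.sqrt ((x.1 - y.1) ^ 2 + (x.2.1 - y.2.1) ^ 2 + (x.2.2 - y.2.2) ^ 2)) ∧
      ∃ x1 x2 x3 : ℝ → ℝ,
        (∀ t : ℝ, 0 ≤ t →
          HasDerivAt x1 (x2 t) t ∧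
          HasDerivAt x2 (x3 t) t ∧
          HasDerivAt x3 (f (x1 t, x2 t, x3 t)
            + kp * (x1 t - ystar) + ki * (∫ s in (0:ℝ)..t, (x1 s - ystar))
            + kd * x2 t) t) ∧
        (∀ M : ℝ, ∃ t : ℝ, 0 ≤ t ∧ M < |x1 t - ystar|) := by
  obtain ⟨z, hz_re, hz⟩ := exists_re_pos_root_quartic L kd kp ki hL
  have hz0 : z ≠ 0 := fun h => by simp [h] at hz_re
  refine ⟨fun x => L * x.2.2 + (ki / z).re, fun x y => ?_,
    fun t => ystar + (cexp (z * t)).re, fun t => (z * cexp (z * t)).re,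
    fun t => (z ^ 2 * cexp (z * t)).re, fun t _ => ⟨?_, ?_, ?_⟩, fun M => ?_⟩
  · rw [add_sub_add_right_eq_sub, ← mul_sub, abs_mul, abs_of_pos hL]
    exact mul_le_mul_of_nonneg_left (abs_le_sqrt (le_add_of_nonneg_left (by positivity))) hL.le
  · simpa using (hasDerivAt_re_mul_cexp_mul 1 z t).const_add ystar
  · simpa [pow_two, mul_assoc] using hasDerivAt_re_mul_cexp_mul z z t
  · convert hasDerivAt_re_mul_cexp_mul (z ^ 2) z t using 1
    simp only [add_sub_cancel_left, integral_re_cexp_mul hz0]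
    rw [← pow_succ, re_pow_three_mul_eq_of_quartic hz0 hz]
  · simpa using exists_lt_abs_re_cexp_mul hz_re M
end

section
/- For any L > 0, any k_i ≠ 0, and any k_p, k_d ∈ ℝ, there exists c ∈ (0, L] such that the polynomial λ⁴ − c·λ³ − k_d·λ² − k_p·λ − k_i has four pairwise distinct roots in ℂ (equivalently, it is squarefree over ℂ). -/
/-!
A repeated root `a` of `p = X⁴ - c X³ - k_d X² - k_p X - k_i` is a common root of `p` and `p'`,
and `a p'(a) - 3 p(a) = a⁴ + k_d a² + 2 k_p a + 3 k_i` no longer involves `c`. So `a` is one of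
the at most four roots of this resolvent, and since `k_i ≠ 0` forces `a ≠ 0`, the equation
`p(a) = 0` determines `c` from `a`. Hence only finitely many `c` give a repeated root, while
`(0, L]` is infinite.
-/

open Polynomial

namespace Polynomial

theorem nodup_roots_of_forall_isRoot_not_isRoot_derivative {R : Type*} [CommRing R] [IsDomain R]
    {p : R[X]} (h : ∀ a, p.IsRoot a → ¬ (derivative p).IsRoot a) : p.roots.Nodup := by
  classical
  by_cases hp : p = 0
  · simp [hp]
  refine Multiset.nodup_iff_count_le_one.mpr fun a => ?_
  rw [count_roots, ← not_lt, one_lt_rootMultiplicity_iff_isRoot hp]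
  exact fun ⟨hroot, hroot'⟩ => h a hroot hroot'

end Polynomial

noncomputable section Quartic

variable {R : Type*} [CommRing R]

def quartic (c kd kp ki : R) : R[X] :=
  X ^ 4 - C c * X ^ 3 - C kd * X ^ 2 - C kp * X - C ki

def quarticResolvent (kd kp ki : R) : R[X] :=
  X ^ 4 + C kd * X ^ 2 + C (2 * kp) * X + C (3 * ki)

theorem natDegree_quartic [Nontrivial R] (c kd kp ki : R) : (quartic c kd kp ki).natDegree = 4 := by
  unfold quartic
  compute_degree!

theorem quarticResolvent_ne_zero [Nontrivial R] (kd kp ki : R) :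
    quarticResolvent kd kp ki ≠ 0 := by
  intro h
  have hdeg : (quarticResolvent kd kp ki).natDegree = 4 := by
    unfold quarticResolvent
    compute_degree!
  simp [h] at hdeg

theorem X_mul_derivative_quartic_sub (c kd kp ki : R) :
    X * derivative (quartic c kd kp ki) - 3 * quartic c kd kp ki = quarticResolvent kd kp ki := by
  simp only [quartic, quarticResolvent, derivative_sub, derivative_mul, derivative_X_pow,
    derivative_C, derivative_X, C_mul, Nat.cast_ofNat, C_ofNat]
  ring

theorem isRoot_quarticResolvent_of_isRoot {c kd kp ki a : R} (h : (quartic c kd kp ki).IsRoot a)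
    (h' : (derivative (quartic c kd kp ki)).IsRoot a) : (quarticResolvent kd kp ki).IsRoot a := by
  rw [IsRoot, ← X_mul_derivative_quartic_sub c]
  simp [h.eq_zero, h'.eq_zero]

theorem ne_zero_of_isRoot_quartic {c kd kp ki a : R} (hki : ki ≠ 0)
    (h : (quartic c kd kp ki).IsRoot a) : a ≠ 0 := by
  rintro rfl
  apply hki
  simpa [quartic] using h

end Quartic

noncomputable section QuarticField

variable {K : Type*} [Field K]

def quarticCoeffOfRoot (kd kp ki a : K) : K :=
  (a ^ 4 - kd * a ^ 2 - kp * a - ki) / a ^ 3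

theorem eq_quarticCoeffOfRoot_of_isRoot {c kd kp ki a : K} (ha : a ≠ 0)
    (h : (quartic c kd kp ki).IsRoot a) : c = quarticCoeffOfRoot kd kp ki a := by
  have h := h.eq_zero
  simp only [quartic, eval_sub, eval_mul, eval_pow, eval_C, eval_X] at h
  rw [quarticCoeffOfRoot, eq_div_iff (pow_ne_zero 3 ha)]
  linear_combination -h

theorem nodup_roots_quartic {c kd kp ki : K} (hki : ki ≠ 0)
    (hc : c ∉ (quarticResolvent kd kp ki).roots.map (quarticCoeffOfRoot kd kp ki)) :
    (quartic c kd kp ki).roots.Nodup := by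
  refine nodup_roots_of_forall_isRoot_not_isRoot_derivative fun a h h' => hc ?_
  have ha : a ≠ 0 := ne_zero_of_isRoot_quartic hki h
  have hr : a ∈ (quarticResolvent kd kp ki).roots :=
    (mem_roots (quarticResolvent_ne_zero kd kp ki)).mpr (isRoot_quarticResolvent_of_isRoot h h')
  exact Multiset.mem_map.mpr ⟨a, hr, (eq_quarticCoeffOfRoot_of_isRoot ha h).symm⟩

end QuarticField

theorem quartic_distinct_roots
    (L kp ki kd : ℝ) (hL : 0 < L) (hki : ki ≠ 0) :
    ∃ c : ℝ, 0 < c ∧ c ≤ L ∧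
      (X ^ 4 - C (c : ℂ) * X ^ 3 - C (kd : ℂ) * X ^ 2
        - C (kp : ℂ) * X - C (ki : ℂ)).roots.toFinset.card = 4 := by
  classical
  obtain ⟨_, ⟨c, ⟨hc0, hcL⟩, rfl⟩, hc⟩ :=
    ((Set.Ioc_infinite hL).image Complex.ofReal_injective.injOn).exists_notMem_finset
      ((quarticResolvent (kd : ℂ) kp ki).roots.map (quarticCoeffOfRoot (kd : ℂ) kp ki)).toFinset
  refine ⟨c, hc0, hcL, ?_⟩
  change (quartic (c : ℂ) kd kp ki).roots.toFinset.card = 4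
  have hnodup := nodup_roots_quartic (Complex.ofReal_ne_zero.mpr hki) (by simpa using hc)
  rw [Multiset.toFinset_card_of_nodup hnodup, IsAlgClosed.card_roots_eq_natDegree,
    natDegree_quartic]
end

section
/- Let λ₂, λ₃ ∈ ℂ with λ₂ ≠ λ₃, Re(λ₃) ≥ Re(λ₂), and Re(λ₃) > 0. Then the function t ↦ λ₃·e^{λ₃ t} − λ₂·e^{λ₂ t} is unbounded on [0,∞), i.e. sup_{t ≥ 0} |λ₃·e^{λ₃ t} − λ₂·e^{λ₂ t}| = ∞. -/
/-!
Factor out `exp (l3 * t)`, whose modulus `exp (l3.re * t)` tends to infinity. The remaining factor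
`l3 - l2 * exp ((l2 - l3) * t)` stays away from zero for arbitrarily large `t`: it tends to
`l3 ≠ 0` when `l2.re < l3.re`. When the real parts agree, `exp ((l2 - l3) * t)` is periodic and
changes sign over half a period, so at `t` and half a period later the factor takes values
`l3 - w` and `l3 + w`, whose moduli add up to at least `2 * ‖l3‖`.
-/

open Filter Topology Complex

theorem norm_mul_exp_sub_mul_exp (l2 l3 : ℂ) (t : ℝ) :
    ‖l3 * exp (l3 * t) - l2 * exp (l2 * t)‖ =
      Real.exp (l3.re * t) * ‖l3 - l2 * exp ((l2 - l3) * t)‖ := by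
  have hfactor : l3 * exp (l3 * t) - l2 * exp (l2 * t) =
      exp (l3 * t) * (l3 - l2 * exp ((l2 - l3) * t)) := by
    rw [mul_sub, mul_left_comm, ← exp_add]
    ring_nf
  rw [hfactor, norm_mul, norm_exp, re_mul_ofReal]

theorem exists_pos_exp_mul_eq_neg_one {z : ℂ} (hre : z.re = 0) (hz : z ≠ 0) :
    ∃ s : ℝ, 0 < s ∧ exp (z * s) = -1 := by
  obtain ⟨ω, rfl⟩ : ∃ ω : ℝ, z = ω * I := ⟨z.im, Complex.ext (by simp [hre]) (by simp)⟩
  have hω : ω ≠ 0 := by rintro rfl; simp at hz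
  have hωC : (ω : ℂ) ≠ 0 := ofReal_ne_zero.2 hω
  rcases hω.lt_or_gt with hneg | hpos
  · refine ⟨-Real.pi / ω, div_pos_of_neg_of_neg (by linarith [Real.pi_pos]) hneg, ?_⟩
    rw [← exp_neg_pi_mul_I]
    congr 1
    push_cast
    field_simp
  · refine ⟨Real.pi / ω, div_pos Real.pi_pos hpos, ?_⟩
    rw [← exp_pi_mul_I]
    congr 1
    push_cast
    field_simp

theorem frequently_norm_le_norm_sub_mul_exp_of_re_eq_zero (a b : ℂ) {z : ℂ}
    (hre : z.re = 0) (hz : z ≠ 0) :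
    ∃ᶠ t : ℝ in atTop, ‖a‖ ≤ ‖a - b * exp (z * t)‖ := by
  obtain ⟨s, hs, hexp⟩ := exists_pos_exp_mul_eq_neg_one hre hz
  refine frequently_atTop.2 fun T => ?_
  set w := b * exp (z * T)
  have hshift : b * exp (z * ↑(T + s)) = -w := by
    rw [ofReal_add, mul_add, exp_add, hexp]
    ring
  have htriangle : 2 * ‖a‖ ≤ ‖a - w‖ + ‖a - -w‖ := by
    calc 2 * ‖a‖ = ‖(a - w) + (a - -w)‖ := by
          rw [show a - w + (a - -w) = 2 * a by ring, norm_mul, Complex.norm_two]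
      _ ≤ ‖a - w‖ + ‖a - -w‖ := norm_add_le _ _
  rcases le_total ‖a‖ ‖a - w‖ with h | h
  · exact ⟨T, le_rfl, h⟩
  · exact ⟨T + s, by linarith, by rw [hshift]; linarith⟩

theorem tendsto_exp_mul_atTop_nhds_zero {z : ℂ} (hre : z.re < 0) :
    Tendsto (fun t : ℝ => exp (z * t)) atTop (𝓝 0) := by
  refine tendsto_exp_comap_re_atBot.comp (tendsto_comap_iff.2 ?_)
  simpa [Function.comp_def] using tendsto_id.const_mul_atTop_of_neg hre

theorem exists_pos_frequently_le_norm_sub_mul_exp {a : ℂ} (b : ℂ) {z : ℂ} (ha : a ≠ 0)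
    (hz : z ≠ 0) (hre : z.re ≤ 0) :
    ∃ ε > 0, ∃ᶠ t : ℝ in atTop, ε ≤ ‖a - b * exp (z * t)‖ := by
  rcases hre.lt_or_eq with hlt | heq
  · have hlim : Tendsto (fun t : ℝ => ‖a - b * exp (z * t)‖) atTop (𝓝 ‖a‖) := by
      simpa using (tendsto_const_nhds.sub
        ((tendsto_exp_mul_atTop_nhds_zero hlt).const_mul b)).norm
    have hhalf : ‖a‖ / 2 < ‖a‖ := half_lt_self (norm_pos_iff.2 ha)
    exact ⟨‖a‖ / 2, by positivity, ((hlim.eventually (lt_mem_nhds hhalf)).mono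
      fun _ h => h.le).frequently⟩
  · exact ⟨‖a‖, norm_pos_iff.2 ha, frequently_norm_le_norm_sub_mul_exp_of_re_eq_zero a b heq hz⟩

theorem exp_combination_unbounded
    (l2 l3 : ℂ) (hne : l2 ≠ l3) (hre : l2.re ≤ l3.re) (hpos : 0 < l3.re) :
    ∀ M : ℝ, ∃ t : ℝ, 0 ≤ t ∧
      M < ‖l3 * Complex.exp (l3 * t) - l2 * Complex.exp (l2 * t)‖ := by
  intro M
  have hl3 : l3 ≠ 0 := fun h => by simp [h] at hpos
  obtain ⟨ε, hε, hfreq⟩ := exists_pos_frequently_le_norm_sub_mul_exp l2 hl3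
    (sub_ne_zero.2 hne) (by simpa using hre)
  have hgrowth : Tendsto (fun t : ℝ => Real.exp (l3.re * t) * ε) atTop atTop :=
    (Real.tendsto_exp_atTop.comp (tendsto_id.const_mul_atTop hpos)).atTop_mul_const hε
  obtain ⟨t, ⟨hM, ht⟩, hεt⟩ :=
    (((hgrowth.eventually_gt_atTop M).and (eventually_ge_atTop 0)).and_frequently hfreq).exists
  refine ⟨t, ht, ?_⟩
  rw [norm_mul_exp_sub_mul_exp]
  calc M < Real.exp (l3.re * t) * ε := hM
    _ ≤ _ := by gcongr
end

section
/- Let n ≥ 1, L > 0, let λ₁, λ₂, λ₃ be pairwise distinct negative reals, and let g : ℝⁿ × ℝⁿ → ℝⁿ be L-Lipschitz with g(0,0) = 0. For z₀, z₁, z₂ ∈ ℝⁿ, write w = g(z₀ + z₁ + (1/λ₃)·z₂, λ₁·z₀ + λ₂·z₁ + z₂) and ‖Z‖² = ‖z₀‖² + ‖z₁‖² + ‖z₂‖². Then λ₁λ₂λ₃·( ‖Z‖² + ⟨w, z₀⟩/((λ₃−λ₁)(λ₂−λ₁)) + ⟨w, z₁⟩/((λ₃−λ₂)(λ₁−λ₂))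 + λ₃·⟨w, z₂⟩/((λ₃−λ₁)(λ₃−λ₂)) ) ≤ λ₁λ₂λ₃·(1 − L·φ(λ₁,λ₂,λ₃)·h(λ₁,λ₂,λ₃))·‖Z‖². -/
open scoped RealInnerProductSpace
set_option maxHeartbeats 1000000

private lemma cs3 (a0 a1 a2 b0 b1 b2 : ℝ) :
    (a0 * b0 + a1 * b1 + a2 * b2) ^ 2 ≤
      (a0 ^ 2 + a1 ^ 2 + a2 ^ 2) * (b0 ^ 2 + b1 ^ 2 + b2 ^ 2) := by
  nlinarith [sq_nonneg (a0 * b1 - a1 * b0), sq_nonneg (a0 * b2 - a2 * b0),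
    sq_nonneg (a1 * b2 - a2 * b1)]

theorem lyapunov_derivative_bound
    (n : ℕ) (hn : 1 ≤ n) (L : ℝ) (hL : 0 < L)
    (l1 l2 l3 : ℝ) (neg1 : l1 < 0) (neg2 : l2 < 0) (neg3 : l3 < 0)
    (h12 : l1 ≠ l2) (h13 : l1 ≠ l3) (h23 : l2 ≠ l3)
    (g : EuclideanSpace ℝ (Fin n) × EuclideanSpace ℝ (Fin n) → EuclideanSpace ℝ (Fin n))
    (hLip : ∀ x y : EuclideanSpace ℝ (Fin n) × EuclideanSpace ℝ (Fin n),
      ‖g x - g y‖ ≤ L * Real.sqrt (‖x.1 - y.1‖ ^ 2 + ‖x.2 - y.2‖ ^ 2))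
    (hg0 : g (0, 0) = 0)
    (z0 z1 z2 : EuclideanSpace ℝ (Fin n))
    (w : EuclideanSpace ℝ (Fin n))
    (hw : w = g (z0 + z1 + (1 / l3) • z2, l1 • z0 + l2 • z1 + z2)) :
    l1 * l2 * l3 * ((‖z0‖ ^ 2 + ‖z1‖ ^ 2 + ‖z2‖ ^ 2)
        + ⟪w, z0⟫ / ((l3 - l1) * (l2 - l1))
        + ⟪w, z1⟫ / ((l3 - l2) * (l1 - l2))
        + l3 * ⟪w, z2⟫ / ((l3 - l1) * (l3 - l2))) ≤
      l1 * l2 * l3 * (1 - L * phi l1 l2 l3 * hfun l1 l2 l3)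
        * (‖z0‖ ^ 2 + ‖z1‖ ^ 2 + ‖z2‖ ^ 2) := by
  have d31 : l3 - l1 ≠ 0 := sub_ne_zero.mpr (Ne.symm h13)
  have d21 : l2 - l1 ≠ 0 := sub_ne_zero.mpr (Ne.symm h12)
  have d32 : l3 - l2 ≠ 0 := sub_ne_zero.mpr (Ne.symm h23)
  have d12 : l1 - l2 ≠ 0 := sub_ne_zero.mpr h12
  have hl3 : l3 ≠ 0 := ne_of_lt neg3
  set c0 : ℝ := 1 / ((l3 - l1) * (l2 - l1)) with hc0
  set c1 : ℝ := 1 / ((l3 - l2) * (l1 - l2)) with hc1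
  set c2 : ℝ := l3 / ((l3 - l1) * (l3 - l2)) with hc2
  set N2 : ℝ := ‖z0‖ ^ 2 + ‖z1‖ ^ 2 + ‖z2‖ ^ 2 with hN2
  have hN2n : 0 ≤ N2 := by positivity
  set N : ℝ := Real.sqrt N2 with hN
  have hNn : 0 ≤ N := Real.sqrt_nonneg _
  have hNsq : N ^ 2 = N2 := Real.sq_sqrt hN2n
  have hphi : phi l1 l2 l3 = Real.sqrt (c0 ^ 2 + c1 ^ 2 + c2 ^ 2) := by
    unfold phi
    congr 1
    rw [hc0, hc1, hc2]
    field_simp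
    ring
  have hphin : 0 ≤ phi l1 l2 l3 := Real.sqrt_nonneg _
  have hhn : 0 ≤ hfun l1 l2 l3 := Real.sqrt_nonneg _
  clear_value c0 c1 c2
  -- bound on v
  set v : EuclideanSpace ℝ (Fin n) := c0 • z0 + c1 • z1 + c2 • z2 with hv
  have hvN : ‖v‖ ≤ phi l1 l2 l3 * N := by
    have h1 : ‖v‖ ≤ |c0| * ‖z0‖ + |c1| * ‖z1‖ + |c2| * ‖z2‖ := by
      calc ‖v‖ ≤ ‖c0 • z0 + c1 • z1‖ + ‖c2 • z2‖ := norm_add_le _ _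
        _ ≤ ‖c0 • z0‖ + ‖c1 • z1‖ + ‖c2 • z2‖ := by
            have h := norm_add_le (c0 • z0) (c1 • z1); linarith only [h]
        _ = |c0| * ‖z0‖ + |c1| * ‖z1‖ + |c2| * ‖z2‖ := by
            simp [norm_smul, Real.norm_eq_abs]
    have h2 : |c0| * ‖z0‖ + |c1| * ‖z1‖ + |c2| * ‖z2‖ ≤
        Real.sqrt ((c0 ^ 2 + c1 ^ 2 + c2 ^ 2) * N2) := by
      rw [Real.le_sqrt (by positivity) (mul_nonneg (by positivity) hN2n)]
      have key := cs3 |c0| |c1| |c2| ‖z0‖ ‖z1‖ ‖z2‖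
      rw [sq_abs, sq_abs, sq_abs] at key
      rw [hN2]
      exact key
    have h3 : Real.sqrt ((c0 ^ 2 + c1 ^ 2 + c2 ^ 2) * N2)
        = phi l1 l2 l3 * N := by
      rw [hphi, hN, Real.sqrt_mul (by positivity)]
    linarith only [h1, h2, h3, le_of_eq h3]
  clear_value v
  -- bound on w
  have hwN : ‖w‖ ≤ L * (hfun l1 l2 l3 * N) := by
    have hlip := hLip (z0 + z1 + (1 / l3) • z2, l1 • z0 + l2 • z1 + z2) (0, 0)
    simp only [hg0, sub_zero] at hlip
    rw [← hw] at hlip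
    have ha : ‖z0 + z1 + (1 / l3) • z2‖ ≤ ‖z0‖ + ‖z1‖ + |1 / l3| * ‖z2‖ := by
      calc ‖z0 + z1 + (1 / l3) • z2‖ ≤ ‖z0 + z1‖ + ‖(1 / l3) • z2‖ := norm_add_le _ _
        _ ≤ ‖z0‖ + ‖z1‖ + |1 / l3| * ‖z2‖ := by
            have h := norm_add_le z0 z1
            simp only [norm_smul, Real.norm_eq_abs]
            linarith only [h]
    have hb : ‖l1 • z0 + l2 • z1 + z2‖ ≤ |l1| * ‖z0‖ + |l2| * ‖z1‖ + ‖z2‖ := by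
      calc ‖l1 • z0 + l2 • z1 + z2‖ ≤ ‖l1 • z0 + l2 • z1‖ + ‖z2‖ := norm_add_le _ _
        _ ≤ |l1| * ‖z0‖ + |l2| * ‖z1‖ + ‖z2‖ := by
            have h := norm_add_le (l1 • z0) (l2 • z1)
            simp only [norm_smul, Real.norm_eq_abs] at h ⊢
            linarith only [h]
    have hsum : ‖z0 + z1 + (1 / l3) • z2‖ ^ 2 + ‖l1 • z0 + l2 • z1 + z2‖ ^ 2 ≤
        (3 + l1 ^ 2 + l2 ^ 2 + 1 / l3 ^ 2) * N2 := by
      have na := norm_nonneg (z0 + z1 + (1 / l3) • z2)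
      have nb := norm_nonneg (l1 • z0 + l2 • z1 + z2)
      have ha2 : ‖z0 + z1 + (1 / l3) • z2‖ ^ 2 ≤ (‖z0‖ + ‖z1‖ + |1 / l3| * ‖z2‖) ^ 2 :=
        pow_le_pow_left₀ na ha 2
      have hb2 : ‖l1 • z0 + l2 • z1 + z2‖ ^ 2 ≤ (|l1| * ‖z0‖ + |l2| * ‖z1‖ + ‖z2‖) ^ 2 :=
        pow_le_pow_left₀ nb hb 2
      have ha3 : (‖z0‖ + ‖z1‖ + |1 / l3| * ‖z2‖) ^ 2 ≤ (2 + 1 / l3 ^ 2) * N2 := by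
        have key := cs3 1 1 |1 / l3| ‖z0‖ ‖z1‖ ‖z2‖
        rw [sq_abs] at key
        rw [hN2]
        have e : ((1:ℝ) ^ 2 + 1 ^ 2 + (1 / l3) ^ 2) = 2 + 1 / l3 ^ 2 := by ring
        rw [e] at key
        calc (‖z0‖ + ‖z1‖ + |1 / l3| * ‖z2‖) ^ 2
            = (1 * ‖z0‖ + 1 * ‖z1‖ + |1 / l3| * ‖z2‖) ^ 2 := by ring
          _ ≤ (2 + 1 / l3 ^ 2) * (‖z0‖ ^ 2 + ‖z1‖ ^ 2 + ‖z2‖ ^ 2) := key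
      have hb3 : (|l1| * ‖z0‖ + |l2| * ‖z1‖ + ‖z2‖) ^ 2 ≤ (l1 ^ 2 + l2 ^ 2 + 1) * N2 := by
        have key := cs3 |l1| |l2| 1 ‖z0‖ ‖z1‖ ‖z2‖
        rw [sq_abs, sq_abs] at key
        rw [hN2]
        calc (|l1| * ‖z0‖ + |l2| * ‖z1‖ + ‖z2‖) ^ 2
            = (|l1| * ‖z0‖ + |l2| * ‖z1‖ + 1 * ‖z2‖) ^ 2 := by ring
          _ ≤ (l1 ^ 2 + l2 ^ 2 + 1 ^ 2) * (‖z0‖ ^ 2 + ‖z1‖ ^ 2 + ‖z2‖ ^ 2) := key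
          _ = (l1 ^ 2 + l2 ^ 2 + 1) * (‖z0‖ ^ 2 + ‖z1‖ ^ 2 + ‖z2‖ ^ 2) := by ring
      have hsplit : (2 + 1 / l3 ^ 2) * N2 + (l1 ^ 2 + l2 ^ 2 + 1) * N2
          = (3 + l1 ^ 2 + l2 ^ 2 + 1 / l3 ^ 2) * N2 := by ring
      calc ‖z0 + z1 + (1 / l3) • z2‖ ^ 2 + ‖l1 • z0 + l2 • z1 + z2‖ ^ 2
          ≤ (2 + 1 / l3 ^ 2) * N2 + (l1 ^ 2 + l2 ^ 2 + 1) * N2 :=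
            add_le_add (ha2.trans ha3) (hb2.trans hb3)
        _ = (3 + l1 ^ 2 + l2 ^ 2 + 1 / l3 ^ 2) * N2 := hsplit
    have hmono : Real.sqrt (‖z0 + z1 + (1 / l3) • z2‖ ^ 2 + ‖l1 • z0 + l2 • z1 + z2‖ ^ 2)
        ≤ hfun l1 l2 l3 * N := by
      have e : hfun l1 l2 l3 * N = Real.sqrt ((3 + l1 ^ 2 + l2 ^ 2 + 1 / l3 ^ 2) * N2) := by
        rw [hfun, hN, Real.sqrt_mul (by positivity)]
      rw [e]
      exact Real.sqrt_le_sqrt hsum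
    calc ‖w‖ ≤ L * Real.sqrt (‖z0 + z1 + (1 / l3) • z2‖ ^ 2 + ‖l1 • z0 + l2 • z1 + z2‖ ^ 2) := hlip
      _ ≤ L * (hfun l1 l2 l3 * N) := mul_le_mul_of_nonneg_left hmono hL.le
  -- rewrite the sum of inner products
  have hSeq : ⟪w, z0⟫ / ((l3 - l1) * (l2 - l1)) + ⟪w, z1⟫ / ((l3 - l2) * (l1 - l2))
      + l3 * ⟪w, z2⟫ / ((l3 - l1) * (l3 - l2)) = ⟪w, v⟫ := by
    rw [hv]
    simp only [inner_add_right, real_inner_smul_right, hc0, hc1, hc2]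
    ring
  have hCS : -(‖w‖ * ‖v‖) ≤ ⟪w, v⟫ := by
    have h := abs_le.mp (abs_real_inner_le_norm w v)
    linarith only [h.1]
  have hprod : ‖w‖ * ‖v‖ ≤ L * phi l1 l2 l3 * hfun l1 l2 l3 * N2 := by
    calc ‖w‖ * ‖v‖ ≤ (L * (hfun l1 l2 l3 * N)) * (phi l1 l2 l3 * N) :=
          mul_le_mul hwN hvN (norm_nonneg _) (by positivity)
      _ = L * phi l1 l2 l3 * hfun l1 l2 l3 * N ^ 2 := by ring
      _ = L * phi l1 l2 l3 * hfun l1 l2 l3 * N2 := by rw [hNsq]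
  have hSlb : -(L * phi l1 l2 l3 * hfun l1 l2 l3 * N2) ≤
      ⟪w, z0⟫ / ((l3 - l1) * (l2 - l1)) + ⟪w, z1⟫ / ((l3 - l2) * (l1 - l2))
      + l3 * ⟪w, z2⟫ / ((l3 - l1) * (l3 - l2)) := by
    rw [hSeq]; linarith only [hCS, hprod]
  have hP : l1 * l2 * l3 ≤ 0 :=
    (mul_neg_of_pos_of_neg (mul_pos_of_neg_of_neg neg1 neg2) neg3).le
  rw [mul_assoc (l1 * l2 * l3)]
  apply mul_le_mul_of_nonpos_left _ hP
  have hexp : (1 - L * phi l1 l2 l3 * hfun l1 l2 l3) * N2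
      = N2 - L * phi l1 l2 l3 * hfun l1 l2 l3 * N2 := by ring
  linarith only [hSlb, hexp]
end

section
/- Fix L > 0 and define Ω_Λ = {(λ₁,λ₂,λ₃) ∈ ℝ³ : λ₁ < 0, λ₂ < 0, λ₃ < 0, λ₁, λ₂, λ₃ pairwise distinct, and L·φ(λ₁,λ₂,λ₃)·h(λ₁,λ₂,λ₃) < 1}. Then Ω_Λ is a nonempty, open, unbounded subset of ℝ³. In particular, for any fixed distinct λ₁, λ₂ < 0 there exists M > 0 such that (λ₁, λ₂, λ₃) ∈ Ω_Λ for every λ₃ < −M. -/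
/-- The admissible eigenvalue region `Ω_Λ`. -/
def OmegaLambda (L : ℝ) : Set (ℝ × ℝ × ℝ) :=
  {p | p.1 < 0 ∧ p.2.1 < 0 ∧ p.2.2 < 0 ∧
    p.1 ≠ p.2.1 ∧ p.1 ≠ p.2.2 ∧ p.2.1 ≠ p.2.2 ∧
    L * phi p.1 p.2.1 p.2.2 * hfun p.1 p.2.1 p.2.2 < 1}

theorem OmegaLambda_nonempty_open_unbounded (L : ℝ) (hL : 0 < L) :
    (OmegaLambda L).Nonempty ∧
    IsOpen (OmegaLambda L) ∧
    ¬ Bornology.IsBounded (OmegaLambda L) ∧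
    (∀ l1 l2 : ℝ, l1 < 0 → l2 < 0 → l1 ≠ l2 →
      ∃ M > (0:ℝ), ∀ l3 : ℝ, l3 < -M → (l1, l2, l3) ∈ OmegaLambda L) := by
  have key : ∀ l1 l2 : ℝ, l1 < 0 → l2 < 0 → l1 ≠ l2 →
      ∃ M > (0:ℝ), ∀ l3 : ℝ, l3 < -M → (l1, l2, l3) ∈ OmegaLambda L := by
    intro l1 l2 h1 h2 h12
    have hd : l2 - l1 ≠ 0 := sub_ne_zero.mpr (Ne.symm h12)
    set F : ℝ → ℝ := fun u =>
      (u ^ 2 * ((1 - l2 * u) ^ 2 + (1 - l1 * u) ^ 2 + (l2 - l1) ^ 2)) /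
        ((1 - l1 * u) ^ 2 * (l2 - l1) ^ 2 * (1 - l2 * u) ^ 2) with hFdef
    set G : ℝ → ℝ := fun u =>
      L * Real.sqrt (F u) * Real.sqrt (3 + l1 ^ 2 + l2 ^ 2 + u ^ 2) with hGdef
    have hFc : ContinuousAt F 0 := by
      apply ContinuousAt.div (by fun_prop) (by fun_prop)
      simp [pow_ne_zero, hd]
    have hGc : ContinuousAt G 0 := by
      exact (continuousAt_const.mul hFc.sqrt).mul (by fun_prop)
    have htend : Filter.Tendsto G (nhds 0) (nhds 0) := by
      have h0 : G 0 = 0 := by simp [hGdef, hFdef]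
      simpa [h0] using hGc.tendsto
    have hinv : Filter.Tendsto (fun l3 : ℝ => (1:ℝ) / l3) Filter.atBot (nhds (0:ℝ)) := by
      have h := (tendsto_inv_atTop_zero (𝕜 := ℝ)).comp Filter.tendsto_neg_atBot_atTop
      have h2 := h.neg
      simp only [Function.comp] at h2
      convert h2 using 2 with x
      · field_simp
      · simp
    have hcomp : Filter.Tendsto (fun l3 => G (1 / l3)) Filter.atBot (nhds 0) :=
      htend.comp hinv
    have heq : ∀ᶠ l3 in Filter.atBot,
        L * phi l1 l2 l3 * hfun l1 l2 l3 = G (1 / l3) := by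
      filter_upwards [Filter.eventually_lt_atBot (min 0 (min l1 l2))] with l3 hl3
      have h30 : l3 ≠ 0 := ne_of_lt (lt_of_lt_of_le hl3 (min_le_left _ _))
      have h31 : l3 - l1 ≠ 0 := sub_ne_zero.mpr
        (ne_of_lt (lt_of_lt_of_le hl3 ((min_le_right _ _).trans (min_le_left _ _))))
      have h32 : l3 - l2 ≠ 0 := sub_ne_zero.mpr
        (ne_of_lt (lt_of_lt_of_le hl3 ((min_le_right _ _).trans (min_le_right _ _))))
      have hphi : phi l1 l2 l3 = Real.sqrt (F (1 / l3)) := by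
        unfold phi
        rw [hFdef]
        congr 1
        field_simp
      have hh : hfun l1 l2 l3 = Real.sqrt (3 + l1 ^ 2 + l2 ^ 2 + (1 / l3) ^ 2) := by
        unfold hfun
        congr 1
        rw [div_pow]
        norm_num
      rw [hphi, hh, hGdef]
    have hfin : Filter.Tendsto (fun l3 => L * phi l1 l2 l3 * hfun l1 l2 l3)
        Filter.atBot (nhds 0) := by
      refine hcomp.congr' (heq.mono fun x hx => hx.symm)
    have hev := hfin.eventually_lt_const one_pos
    obtain ⟨b, hb⟩ := Filter.eventually_atBot.mp hev
    refine ⟨max (|b| + 1) (max (-l1 + 1) (-l2 + 1)), ?_, ?_⟩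
    · exact lt_of_lt_of_le (by positivity) (le_max_left _ _)
    · intro l3 hl3
      have hx : |b| + 1 ≤ max (|b| + 1) (max (-l1 + 1) (-l2 + 1)) := le_max_left _ _
      have hy : -l1 + 1 ≤ max (|b| + 1) (max (-l1 + 1) (-l2 + 1)) :=
        le_max_of_le_right (le_max_left _ _)
      have hz : -l2 + 1 ≤ max (|b| + 1) (max (-l1 + 1) (-l2 + 1)) :=
        le_max_of_le_right (le_max_right _ _)
      have hMb : l3 < b := by
        have hb' : -|b| ≤ b := neg_abs_le b
        linarith
      have hM1 : l3 < l1 := by linarith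
      have hM2 : l3 < l2 := by linarith
      exact ⟨h1, h2, lt_trans hM1 h1, h12, (ne_of_lt hM1).symm, (ne_of_lt hM2).symm,
        hb l3 hMb.le⟩
  obtain ⟨M₀, hM₀, hmem₀⟩ := key (-1) (-2) (by norm_num) (by norm_num) (by norm_num)
  refine ⟨⟨(-1, -2, -(M₀ + 1)), hmem₀ _ (by linarith)⟩, ?_, ?_, key⟩
  · -- openness
    have hS : IsOpen {p : ℝ × ℝ × ℝ | p.1 < 0 ∧ p.2.1 < 0 ∧ p.2.2 < 0 ∧
        p.1 ≠ p.2.1 ∧ p.1 ≠ p.2.2 ∧ p.2.1 ≠ p.2.2} := by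
      have c1 : Continuous fun p : ℝ × ℝ × ℝ => p.1 := continuous_fst
      have c2 : Continuous fun p : ℝ × ℝ × ℝ => p.2.1 := continuous_fst.comp continuous_snd
      have c3 : Continuous fun p : ℝ × ℝ × ℝ => p.2.2 := continuous_snd.comp continuous_snd
      exact (isOpen_lt c1 continuous_const).inter ((isOpen_lt c2 continuous_const).inter
        ((isOpen_lt c3 continuous_const).inter ((isOpen_ne_fun c1 c2).inter
        ((isOpen_ne_fun c1 c3).inter (isOpen_ne_fun c2 c3)))))
    have hf : ContinuousOn
        (fun p : ℝ × ℝ × ℝ => L * phi p.1 p.2.1 p.2.2 * hfun p.1 p.2.1 p.2.2)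
        {p : ℝ × ℝ × ℝ | p.1 < 0 ∧ p.2.1 < 0 ∧ p.2.2 < 0 ∧
          p.1 ≠ p.2.1 ∧ p.1 ≠ p.2.2 ∧ p.2.1 ≠ p.2.2} := by
      have hphi : ContinuousOn (fun p : ℝ × ℝ × ℝ => phi p.1 p.2.1 p.2.2)
          {p : ℝ × ℝ × ℝ | p.1 < 0 ∧ p.2.1 < 0 ∧ p.2.2 < 0 ∧
            p.1 ≠ p.2.1 ∧ p.1 ≠ p.2.2 ∧ p.2.1 ≠ p.2.2} := by
        unfold phi
        apply ContinuousOn.sqrt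
        apply ContinuousOn.div (by fun_prop) (by fun_prop)
        intro p hp
        obtain ⟨-, -, -, hA, hB, hC⟩ := hp
        exact mul_ne_zero (mul_ne_zero (pow_ne_zero _ (sub_ne_zero.mpr (Ne.symm hB)))
          (pow_ne_zero _ (sub_ne_zero.mpr (Ne.symm hA))))
          (pow_ne_zero _ (sub_ne_zero.mpr (Ne.symm hC)))
      have hh : ContinuousOn (fun p : ℝ × ℝ × ℝ => hfun p.1 p.2.1 p.2.2)
          {p : ℝ × ℝ × ℝ | p.1 < 0 ∧ p.2.1 < 0 ∧ p.2.2 < 0 ∧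
            p.1 ≠ p.2.1 ∧ p.1 ≠ p.2.2 ∧ p.2.1 ≠ p.2.2} := by
        unfold hfun
        apply ContinuousOn.sqrt
        apply ContinuousOn.add (by fun_prop)
        apply ContinuousOn.div continuousOn_const (by fun_prop)
        intro p hp
        exact pow_ne_zero _ (ne_of_lt hp.2.2.1)
      exact (continuousOn_const.mul hphi).mul hh
    have heq : OmegaLambda L = {p : ℝ × ℝ × ℝ | p.1 < 0 ∧ p.2.1 < 0 ∧ p.2.2 < 0 ∧
        p.1 ≠ p.2.1 ∧ p.1 ≠ p.2.2 ∧ p.2.1 ≠ p.2.2} ∩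
        (fun p : ℝ × ℝ × ℝ => L * phi p.1 p.2.1 p.2.2 * hfun p.1 p.2.1 p.2.2) ⁻¹'
          Set.Iio 1 := by
      ext p
      simp only [OmegaLambda, Set.mem_setOf_eq, Set.mem_inter_iff, Set.mem_preimage,
        Set.mem_Iio]
      tauto
    rw [heq]
    exact hf.isOpen_inter_preimage hS isOpen_Iio
  · -- unbounded
    intro hbdd
    obtain ⟨r, hr⟩ := isBounded_iff_forall_norm_le.mp hbdd
    set l3 : ℝ := -(max M₀ r + 1) with hl3def
    have hpt : ((-1 : ℝ), (-2 : ℝ), l3) ∈ OmegaLambda L := by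
      apply hmem₀
      have : M₀ ≤ max M₀ r := le_max_left _ _
      simp only [hl3def]
      linarith
    have hnorm := hr _ hpt
    have h1 : ‖l3‖ ≤ ‖((-1 : ℝ), (-2 : ℝ), l3)‖ :=
      le_trans (norm_snd_le ((-2 : ℝ), l3)) (norm_snd_le ((-1 : ℝ), ((-2 : ℝ), l3)))
    have h2 : ‖l3‖ = max M₀ r + 1 := by
      rw [hl3def, norm_neg, Real.norm_eq_abs, abs_of_pos]
      have : (0:ℝ) ≤ max M₀ r := le_trans hM₀.le (le_max_left _ _)
      linarith
    have : r ≤ max M₀ r := le_max_right _ _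
    linarith [le_trans h1 hnorm, h2 ▸ le_trans h1 hnorm]
end

section
/- Fix L > 0 and define Ω_Λ = {(λ₁,λ₂,λ₃) ∈ ℝ³ : λ₁ < 0, λ₂ < 0, λ₃ < 0, λ₁, λ₂, λ₃ pairwise distinct, and L·φ(λ₁,λ₂,λ₃)·h(λ₁,λ₂,λ₃) < 1}, and let Ω_K ⊂ ℝ³ be the image of Ω_Λ under the map (λ₁,λ₂,λ₃) ↦ (−(λ₁λ₂+λ₁λ₃+λ₂λ₃), λ₁λ₂λ₃, λ₁+λ₂+λ₃). Then Ω_K is a nonempty, open, unbounded subset of ℝ³. -/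
/-- The map sending eigenvalues `(λ₁, λ₂, λ₃)` to PID gains `(k_p, k_i, k_d)`. -/
def gainMap (p : ℝ × ℝ × ℝ) : ℝ × ℝ × ℝ :=
  (-(p.1 * p.2.1 + p.1 * p.2.2 + p.2.1 * p.2.2),
    p.1 * p.2.1 * p.2.2,
    p.1 + p.2.1 + p.2.2)

/-- The admissible PID gain region `Ω_K`, image of `Ω_Λ` under the Vieta map. -/
def OmegaK (L : ℝ) : Set (ℝ × ℝ × ℝ) := gainMap '' OmegaLambda L


/-!
Openness: `Ω_Λ` is cut out by strict inequalities between functions continuous on the set of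
distinct negative triples, and the Jacobian of the Vieta map `gainMap` at a triple of distinct
roots is invertible (its determinant is a Vandermonde determinant), so by the inverse function
theorem `gainMap` maps neighbourhoods of points of `Ω_Λ` onto neighbourhoods.
Unboundedness (hence nonemptiness): along `(-1, -2, -t)` one has `φ = O(1/t)` and `h ≤ 3`, so
these points lie in `Ω_Λ` for large `t`, while their gain `k_d = -(t + 3)` is unbounded.
-/

open Filter Set

section VietaJacobian

variable {R : Type*} [CommRing R]

def vietaDeriv (p : R × R × R) : (R × R × R) →ₗ[R] (R × R × R) where
  toFun v := (-((p.2.1 + p.2.2) * v.1 + (p.1 + p.2.2) * v.2.1 + (p.1 + p.2.1) * v.2.2),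
    p.2.1 * p.2.2 * v.1 + p.1 * p.2.2 * v.2.1 + p.1 * p.2.1 * v.2.2,
    v.1 + v.2.1 + v.2.2)
  map_add' v w := by ext <;> dsimp <;> ring
  map_smul' r v := by ext <;> dsimp <;> ring

theorem vietaDeriv_injective [IsDomain R] {p : R × R × R}
    (h12 : p.1 ≠ p.2.1) (h13 : p.1 ≠ p.2.2) (h23 : p.2.1 ≠ p.2.2) :
    Function.Injective (vietaDeriv p) := by
  obtain ⟨a, b, c⟩ := p
  rw [injective_iff_map_eq_zero]
  rintro ⟨v₁, v₂, v₃⟩ hv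
  simp only [vietaDeriv, LinearMap.coe_mk, AddHom.coe_mk, Prod.mk_eq_zero] at hv
  obtain ⟨e₁, e₂, e₃⟩ := hv
  -- The row combination `x² e₃ + x e₁ + e₂` isolates the coordinate of the root `x`, multiplied
  -- by the product of its differences with the other two roots.
  have hv₁ : v₁ = 0 := (mul_eq_zero.1 (by linear_combination a ^ 2 * e₃ + a * e₁ + e₂)).resolve_left
    (mul_ne_zero (sub_ne_zero.2 h12) (sub_ne_zero.2 h13))
  have hv₂ : v₂ = 0 := (mul_eq_zero.1 (by linear_combination b ^ 2 * e₃ + b * e₁ + e₂)).resolve_left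
    (mul_ne_zero (sub_ne_zero.2 h12.symm) (sub_ne_zero.2 h23))
  have hv₃ : v₃ = 0 := (mul_eq_zero.1 (by linear_combination c ^ 2 * e₃ + c * e₁ + e₂)).resolve_left
    (mul_ne_zero (sub_ne_zero.2 h13.symm) (sub_ne_zero.2 h23.symm))
  rw [hv₁, hv₂, hv₃]
  rfl

end VietaJacobian

theorem hasStrictFDerivAt_gainMap (p : ℝ × ℝ × ℝ) :
    HasStrictFDerivAt gainMap (LinearMap.toContinuousLinearMap (vietaDeriv p)) p := by
  have h₁ : HasStrictFDerivAt (fun q : ℝ × ℝ × ℝ => q.1)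
      (ContinuousLinearMap.fst ℝ ℝ (ℝ × ℝ)) p := hasStrictFDerivAt_fst
  have h₂ : HasStrictFDerivAt (fun q : ℝ × ℝ × ℝ => q.2.1)
      ((ContinuousLinearMap.fst ℝ ℝ ℝ).comp (ContinuousLinearMap.snd ℝ ℝ (ℝ × ℝ))) p :=
    hasStrictFDerivAt_fst.comp p hasStrictFDerivAt_snd
  have h₃ : HasStrictFDerivAt (fun q : ℝ × ℝ × ℝ => q.2.2)
      ((ContinuousLinearMap.snd ℝ ℝ ℝ).comp (ContinuousLinearMap.snd ℝ ℝ (ℝ × ℝ))) p :=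
    hasStrictFDerivAt_snd.comp p hasStrictFDerivAt_snd
  refine ((((h₁.mul h₂).add (h₁.mul h₃)).add (h₂.mul h₃)).neg.prodMk
    (((h₁.mul h₂).mul h₃).prodMk ((h₁.add h₂).add h₃))).congr_fderiv ?_
  ext <;> simp [vietaDeriv] <;> ring

theorem isOpen_image_gainMap {U : Set (ℝ × ℝ × ℝ)} (hU : IsOpen U)
    (hdist : ∀ p ∈ U, p.1 ≠ p.2.1 ∧ p.1 ≠ p.2.2 ∧ p.2.1 ≠ p.2.2) : IsOpen (gainMap '' U) := by
  refine isOpen_iff_mem_nhds.2 ?_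
  rintro _ ⟨p, hp, rfl⟩
  obtain ⟨h12, h13, h23⟩ := hdist p hp
  have hsurj : (LinearMap.toContinuousLinearMap (vietaDeriv p)).range = ⊤ :=
    LinearMap.range_eq_top.2 (LinearMap.injective_iff_surjective.1 (vietaDeriv_injective h12 h13 h23))
  rw [← (hasStrictFDerivAt_gainMap p).map_nhds_eq_of_surj hsurj]
  exact image_mem_map (hU.mem_nhds hp)

theorem continuousAt_phi {p : ℝ × ℝ × ℝ}
    (h12 : p.1 ≠ p.2.1) (h13 : p.1 ≠ p.2.2) (h23 : p.2.1 ≠ p.2.2) :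
    ContinuousAt (fun q : ℝ × ℝ × ℝ => phi q.1 q.2.1 q.2.2) p := by
  refine (ContinuousAt.div (by fun_prop) (by fun_prop) ?_).sqrt
  have := sub_ne_zero.2 h12.symm
  have := sub_ne_zero.2 h13.symm
  have := sub_ne_zero.2 h23.symm
  positivity

theorem continuousAt_hfun {p : ℝ × ℝ × ℝ} (h3 : p.2.2 ≠ 0) :
    ContinuousAt (fun q : ℝ × ℝ × ℝ => hfun q.1 q.2.1 q.2.2) p := by
  unfold hfun
  refine (ContinuousAt.add (by fun_prop) (continuousAt_const.div (by fun_prop) ?_)).sqrt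
  exact pow_ne_zero 2 h3

theorem isOpen_OmegaLambda (L : ℝ) : IsOpen (OmegaLambda L) := by
  refine isOpen_iff_mem_nhds.2 fun p ⟨h1, h2, h3, h12, h13, h23, hL⟩ => ?_
  have hcont : ContinuousAt
      (fun q : ℝ × ℝ × ℝ => L * phi q.1 q.2.1 q.2.2 * hfun q.1 q.2.1 q.2.2) p :=
    (continuousAt_const.mul (continuousAt_phi h12 h13 h23)).mul (continuousAt_hfun h3.ne)
  filter_upwards [(isOpen_lt continuous_fst continuous_const).mem_nhds h1,
    (isOpen_lt continuous_snd.fst continuous_const).mem_nhds h2,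
    (isOpen_lt continuous_snd.snd continuous_const).mem_nhds h3,
    (isOpen_ne_fun continuous_fst continuous_snd.fst).mem_nhds h12,
    (isOpen_ne_fun continuous_fst continuous_snd.snd).mem_nhds h13,
    (isOpen_ne_fun continuous_snd.fst continuous_snd.snd).mem_nhds h23,
    hcont.eventually_lt continuousAt_const hL] with q h1 h2 h3 h12 h13 h23 hL
  exact ⟨h1, h2, h3, h12, h13, h23, hL⟩

theorem phi_neg_one_neg_two_le {t : ℝ} (ht : 2 < t) : phi (-1) (-2) (-t) ≤ 3 / (t - 2) := by
  have ht1 : 0 < t - 1 := by linarith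
  have ht2 : 0 < t - 2 := by linarith
  have hphi : phi (-1) (-2) (-t) =
      √(((t - 2) ^ 2 + (t - 1) ^ 2 + t ^ 2) / ((t - 1) ^ 2 * (t - 2) ^ 2)) := by
    rw [phi]; congr 1; ring
  rw [hphi, Real.sqrt_le_iff, div_pow, div_le_div_iff₀ (by positivity) (by positivity)]
  refine ⟨by positivity, ?_⟩
  have hnum : (t - 2) ^ 2 + (t - 1) ^ 2 + t ^ 2 ≤ 9 * (t - 1) ^ 2 := by nlinarith
  nlinarith [mul_le_mul_of_nonneg_right hnum (sq_nonneg (t - 2))]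

theorem hfun_neg_one_neg_two_le {t : ℝ} (ht : 1 ≤ t) : hfun (-1) (-2) (-t) ≤ 3 := by
  have ht' : 1 / (-t) ^ 2 ≤ 1 := by
    rw [neg_sq, div_le_one (by positivity)]
    nlinarith
  rw [hfun, Real.sqrt_le_iff]
  constructor <;> linarith

theorem neg_one_neg_two_mem_OmegaLambda {L t : ℝ} (ht : 9 * |L| + 2 < t) :
    ((-1, -2, -t) : ℝ × ℝ × ℝ) ∈ OmegaLambda L := by
  have ht2 : 2 < t := by linarith [abs_nonneg L]
  refine ⟨by norm_num, by norm_num, by linarith, by norm_num,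
    (show -t < (-1 : ℝ) by linarith).ne', (show -t < (-2 : ℝ) by linarith).ne', ?_⟩
  have hphi := phi_neg_one_neg_two_le ht2
  have hh := hfun_neg_one_neg_two_le (by linarith : 1 ≤ t)
  calc L * phi (-1) (-2) (-t) * hfun (-1) (-2) (-t)
      ≤ |L| * (3 / (t - 2)) * 3 := by
        have : 0 ≤ phi (-1) (-2) (-t) := Real.sqrt_nonneg _
        have : 0 ≤ hfun (-1) (-2) (-t) := Real.sqrt_nonneg _
        gcongr
        exact le_abs_self L
    _ < 1 := by
      rw [show |L| * (3 / (t - 2)) * 3 = 9 * |L| / (t - 2) by ring, div_lt_one (by linarith)]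
      linarith

theorem not_isBounded_OmegaK (L : ℝ) : ¬ Bornology.IsBounded (OmegaK L) := by
  rw [isBounded_iff_forall_norm_le]
  rintro ⟨C, hC⟩
  set t := max (9 * |L| + 3) C
  have hmem : gainMap (-1, -2, -t) ∈ OmegaK L :=
    mem_image_of_mem gainMap (neg_one_neg_two_mem_OmegaLambda (lt_max_of_lt_left (by linarith)))
  have hkd : (gainMap (-1, -2, -t)).2.2 = -(t + 3) := by
    simp only [gainMap]; ring
  have hnorm : ‖(gainMap (-1, -2, -t)).2.2‖ ≤ ‖gainMap (-1, -2, -t)‖ :=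
    (norm_snd_le _).trans (norm_snd_le _)
  rw [hkd, norm_neg, Real.norm_of_nonneg (by positivity)] at hnorm
  linarith [hC _ hmem, le_max_right (9 * |L| + 3) C]

theorem OmegaK_nonempty_open_unbounded_general (L : ℝ) :
    (OmegaK L).Nonempty ∧ IsOpen (OmegaK L) ∧ ¬ Bornology.IsBounded (OmegaK L) :=
  ⟨Bornology.nonempty_of_not_isBounded (not_isBounded_OmegaK L),
    isOpen_image_gainMap (isOpen_OmegaLambda L) fun _ ⟨_, _, _, h12, h13, h23, _⟩ =>
      ⟨h12, h13, h23⟩,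
    not_isBounded_OmegaK L⟩

theorem OmegaK_nonempty_open_unbounded (L : ℝ) (hL : 0 < L) :
    (OmegaK L).Nonempty ∧ IsOpen (OmegaK L) ∧ ¬ Bornology.IsBounded (OmegaK L) :=
  OmegaK_nonempty_open_unbounded_general L
end
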